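/- arXiv:1601.06453 — 6 statements merged into one kernel-verified Lean document; each statement's English description precedes it below -/
import Mathlib

section
/- Let {X_n} be the stationary symmetric binary Markov process with transition probability q ∈ (0,1/2), let 0 < λ < 1, and for each n let S be a random subset of {1,…,n} obtained by including each element independently with probability λ. Then lim_{n→∞} H(X_S|S)/(λn) = E[h(q^{*G})], where G is a geometric random variable with parameter λ and q^{*k} := (1-(1-2q)^k)/2. -/
open Real Filter MeasureTheory

/-- Binary entropy function (base-2 logarithm), with `binEnt 0 = binEnt 1 = 0`. -/
noncomputable def binEnt (p : ℝ) : ℝ :=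
  -p * Real.logb 2 p - (1 - p) * Real.logb 2 (1 - p)

/-- Inverse of the binary entropy function, mapping `[0,1]` onto `[0,1/2]`. -/
noncomputable def binEntInv (y : ℝ) : ℝ :=
  sInf {p : ℝ | p ∈ Set.Icc (0:ℝ) (1/2) ∧ y ≤ binEnt p}

/-- Binary convolution `a*b := a(1-b) + b(1-a)`. -/
def bConv (a b : ℝ) : ℝ := a * (1 - b) + b * (1 - a)

/-- Shannon entropy (in bits) of a distribution on a finite type. -/
noncomputable def entropyDist {β : Type*} [Fintype β] (p : β → ℝ) : ℝ :=
  ∑ b, -(p b * Real.logb 2 (p b))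

/-- Probability of the path `x` under the stationary symmetric binary Markov process with
transition probability `q`: the first coordinate is uniform (`Bernoulli(1/2)`) and each
subsequent coordinate flips the previous one with probability `q`. -/
noncomputable def symPathProb (q : ℝ) (n : ℕ) (x : Fin n → Bool) : ℝ :=
  ∏ i : Fin n,
    if (i : ℕ) = 0 then (1/2 : ℝ)
    else if x ⟨(i : ℕ) - 1, Nat.lt_of_le_of_lt (Nat.sub_le _ _) i.isLt⟩ = x i then 1 - q else q

/-- Output distribution of a memoryless binary symmetric channel with crossover probability `a`
applied to an input with distribution `p` (each coordinate flipped independently w.p. `a`). -/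
noncomputable def bscOutput {n : ℕ} (a : ℝ) (p : (Fin n → Bool) → ℝ) : (Fin n → Bool) → ℝ :=
  fun y => ∑ x : Fin n → Bool, p x * ∏ i, (if y i = x i then 1 - a else a)

/-- Distribution of the projection onto the coordinates in `s` of a vector with distribution `p`. -/
noncomputable def projDist {n : ℕ} (p : (Fin n → Bool) → ℝ) (s : Finset (Fin n)) :
    ({ i // i ∈ s } → Bool) → ℝ :=
  fun y => ∑ x : Fin n → Bool, if (∀ i : { i // i ∈ s }, x i.val = y i) then p x else 0

/-- `H(X_S | S) = ∑_{s ⊆ [n]} P(S = s) H(X_s)`, where the random subset `S` contains each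
element of `[n]` independently with probability `lam`. -/
noncomputable def condEntProj {n : ℕ} (lam : ℝ) (p : (Fin n → Bool) → ℝ) : ℝ :=
  ∑ s : Finset (Fin n), lam ^ s.card * (1 - lam) ^ (n - s.card) * entropyDist (projDist p s)

/-- Transition kernel of a binary Markov chain: `P(b | a)` with off-diagonal entries
`q01 = P(1|0)` and `q10 = P(0|1)`. -/
def markovTrans (q01 q10 : ℝ) (a b : Bool) : ℝ :=
  if a then (if b then 1 - q10 else q10) else (if b then q01 else 1 - q01)

/-- Probability of the path `x` under the binary Markov chain with initial distribution
`(p0, p1)` and transition probabilities `q01, q10`. -/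
noncomputable def markovPathProb (p0 p1 q01 q10 : ℝ) (n : ℕ) (x : Fin n → Bool) : ℝ :=
  ∏ i : Fin n,
    if (i : ℕ) = 0 then (if x i then p1 else p0)
    else markovTrans q01 q10 (x ⟨(i : ℕ) - 1, Nat.lt_of_le_of_lt (Nat.sub_le _ _) i.isLt⟩) (x i)

/-!
For `s = {i₁ < ⋯ < i_k}` the projection `X_s` is again a symmetric binary Markov chain: `X_{i₁}` is
uniform and `X_{i_{r+1}}` is `X_{i_r}` passed through a binary symmetric channel with crossover
probability `q^{*(i_{r+1} - i_r)}`, because cascaded channels compose by binary convolution. The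
chain rule therefore gives `H(X_s) = 1 + ∑_r h(q^{*(i_{r+1} - i_r)})`. Averaging over `S`, each
position `k` lies in `S` with probability `λ`, and then the previous element of `S` lies at distance
`g + 1` with probability `(1 - λ)^g λ`, or is absent with probability `(1 - λ)^k`. Hence `H(X_S|S)`
is `λ` times a sum of `n` terms converging to `E[h(q^{*G})]`, and Cesàro averaging gives the limit.
-/

namespace ProjEntropy

open Finset

def flipKer (a : ℝ) (b c : Bool) : ℝ := if b = c then 1 - a else a

noncomputable def bConvPow (q : ℝ) (k : ℕ) : ℝ := (1 - (1 - 2 * q) ^ k) / 2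

lemma sum_flipKer (a : ℝ) (b : Bool) : ∑ c, flipKer a b c = 1 := by
  cases b <;> simp [flipKer]

lemma sum_flipKer_mul_flipKer (a a' : ℝ) (b d : Bool) :
    ∑ c, flipKer a b c * flipKer a' c d = flipKer (bConv a a') b d := by
  cases b <;> cases d <;> simp [flipKer, bConv] <;> ring

lemma sum_flipKer_zero_mul (w : Bool → ℝ) (b : Bool) : ∑ c, flipKer 0 b c * w c = w b := by
  cases b <;> simp [flipKer]

lemma bConvPow_zero (q : ℝ) : bConvPow q 0 = 0 := by simp [bConvPow]

lemma bConvPow_succ (q : ℝ) (k : ℕ) : bConvPow q (k + 1) = bConv (bConvPow q k) q := by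
  simp only [bConvPow, bConv, pow_succ]; ring

lemma bConvPow_mem_Icc {q : ℝ} (hq0 : 0 ≤ q) (hq1 : q ≤ 1) (k : ℕ) :
    bConvPow q k ∈ Set.Icc 0 1 := by
  have h : |1 - 2 * q| ^ k ≤ 1 :=
    pow_le_one₀ (abs_nonneg _) (abs_le.mpr ⟨by linarith, by linarith⟩)
  rw [← abs_pow] at h
  obtain ⟨h₁, h₂⟩ := abs_le.mp h
  constructor <;> simp only [bConvPow] <;> linarith

lemma sum_fun_fin_succ {β : Type*} [Fintype β] {n : ℕ} (f : (Fin (n + 1) → β) → ℝ) :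
    ∑ x, f x = ∑ x : Fin n → β, ∑ b, f (Fin.snoc x b) := by
  rw [← (Fin.snocEquiv fun _ => β).sum_comp, Fintype.sum_prod_type, sum_comm]
  rfl

lemma snoc_mk {β : Type*} {n : ℕ} (x : Fin n → β) (b : β) {v : ℕ} (h : v < n) :
    (Fin.snoc x b : Fin (n + 1) → β) ⟨v, by omega⟩ = x ⟨v, h⟩ :=
  Fin.snoc_castSucc (α := fun _ => β) b x ⟨v, h⟩

lemma symPathProb_snoc (q : ℝ) (n : ℕ) (x : Fin n → Bool) (b : Bool) :
    symPathProb q (n + 1) (Fin.snoc x b) =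
      symPathProb q n x * if h : 0 < n then flipKer q (x ⟨n - 1, by omega⟩) b else 1 / 2 := by
  rw [symPathProb, Fin.prod_univ_castSucc]
  congr 1
  · refine prod_congr rfl fun i _ => ?_
    by_cases hi : (i : ℕ) = 0
    · simp [hi]
    · simp only [Fin.val_castSucc, hi, if_false, Fin.snoc_castSucc,
        snoc_mk x b (by omega : (i : ℕ) - 1 < n)]
  · rcases Nat.eq_zero_or_pos n with rfl | hn
    · simp
    · simp only [Fin.val_last, hn, dif_pos, Nat.pos_iff_ne_zero.mp hn, if_false, Fin.snoc_last,
        snoc_mk x b (by omega : n - 1 < n), flipKer]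

lemma symPathProb_snoc_succ (q : ℝ) (n : ℕ) (x : Fin (n + 1) → Bool) (b : Bool) :
    symPathProb q (n + 2) (Fin.snoc x b) = symPathProb q (n + 1) x * flipKer q (x (Fin.last n)) b :=
  (symPathProb_snoc q (n + 1) x b).trans (by rw [dif_pos n.succ_pos]; rfl)

lemma sum_symPathProb_snoc (q : ℝ) (n : ℕ) (x : Fin n → Bool) :
    ∑ b, symPathProb q (n + 1) (Fin.snoc x b) = symPathProb q n x := by
  simp only [symPathProb_snoc, ← mul_sum]
  split_ifs
  · rw [sum_flipKer, mul_one]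
  · norm_num

lemma snoc_comp_castLE {β : Type*} {k n : ℕ} (h : k ≤ n) (x : Fin n → β) (b : β) :
    (Fin.snoc x b : Fin (n + 1) → β) ∘ Fin.castLE (h.trans n.le_succ) = x ∘ Fin.castLE h :=
  funext fun i => snoc_mk x b (lt_of_lt_of_le i.isLt h)

lemma sum_comp_castLE_mul_symPathProb (q : ℝ) {k n : ℕ} (h : k ≤ n) (g : (Fin k → Bool) → ℝ) :
    ∑ x : Fin n → Bool, g (x ∘ Fin.castLE h) * symPathProb q n x =
      ∑ x, g x * symPathProb q k x := by
  induction n, h using Nat.le_induction with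
  | base => rfl
  | succ n hkn ih =>
    rw [sum_fun_fin_succ, ← ih]
    refine sum_congr rfl fun x _ => ?_
    simp only [snoc_comp_castLE hkn, ← mul_sum, sum_symPathProb_snoc]

lemma sum_symPathProb (q : ℝ) (n : ℕ) : ∑ x, symPathProb q n x = 1 := by
  simpa [symPathProb] using sum_comp_castLE_mul_symPathProb q n.zero_le fun _ => 1

/-- Given `X_0, …, X_p`, the coordinate `X_m` is `X_p` passed through a binary symmetric channel
with crossover probability `q^{*(m - p)}`. -/
lemma sum_mul_last_mul_symPathProb (q : ℝ) {p m : ℕ} (hpm : p ≤ m)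
    (g : (Fin (p + 1) → Bool) → ℝ) (w : Bool → ℝ) :
    ∑ x : Fin (m + 1) → Bool,
        g (x ∘ Fin.castLE (by omega)) * w (x (Fin.last m)) * symPathProb q (m + 1) x =
      ∑ x, g x * (∑ c, flipKer (bConvPow q (m - p)) (x (Fin.last p)) c * w c) *
        symPathProb q (p + 1) x := by
  induction m, hpm using Nat.le_induction generalizing w with
  | base => simp only [Nat.sub_self, bConvPow_zero, sum_flipKer_zero_mul]; rfl
  | succ m hpm ih =>
    have hstep (x : Fin (m + 1) → Bool) :
        ∑ b, g ((Fin.snoc x b : Fin (m + 2) → Bool) ∘ Fin.castLE (by omega)) *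
            w ((Fin.snoc x b : Fin (m + 2) → Bool) (Fin.last (m + 1))) *
            symPathProb q (m + 2) (Fin.snoc x b) =
          g (x ∘ Fin.castLE (by omega)) * (∑ b, flipKer q (x (Fin.last m)) b * w b) *
            symPathProb q (m + 1) x := by
      simp only [snoc_comp_castLE (by omega : p + 1 ≤ m + 1), Fin.snoc_last, symPathProb_snoc_succ,
        mul_sum, sum_mul]
      exact sum_congr rfl fun _ _ => by ring
    rw [sum_fun_fin_succ, sum_congr rfl fun x _ => hstep x]
    refine (ih fun a => ∑ b, flipKer q a b * w b).trans (sum_congr rfl fun x _ => ?_)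
    rw [Nat.sub_add_comm hpm, bConvPow_succ]
    congr 2
    simp only [← sum_flipKer_mul_flipKer, mul_sum, sum_mul, mul_assoc]
    exact sum_comm

lemma sum_last_mul_symPathProb (q : ℝ) (m : ℕ) (w : Bool → ℝ) :
    ∑ x : Fin (m + 1) → Bool, w (x (Fin.last m)) * symPathProb q (m + 1) x = (∑ b, w b) / 2 := by
  have h := sum_mul_last_mul_symPathProb q m.zero_le (fun _ => 1) w
  have hP (x : Fin 1 → Bool) : symPathProb q 1 x = 1 / 2 := by simp [symPathProb]
  simp only [one_mul] at h
  rw [h, ← (Equiv.funUnique (Fin 1) Bool).symm.sum_comp]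
  simp only [hP, Fintype.sum_bool, Equiv.funUnique_symm_apply, uniqueElim_const, flipKer, if_true,
    Bool.true_eq_false, Bool.false_eq_true, if_false]
  ring

def insertEquiv {α β : Type*} [DecidableEq α] {s : Finset α} {a : α} (ha : a ∉ s) :
    ({i // i ∈ s} → β) × β ≃ ({i // i ∈ insert a s} → β) where
  toFun z i := if h : i.1 = a then z.2 else z.1 ⟨i.1, (mem_insert.mp i.2).resolve_left h⟩
  invFun y := (fun i => y ⟨i.1, mem_insert_of_mem i.2⟩, y ⟨a, mem_insert_self a s⟩)
  left_inv z := by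
    ext i
    · simp [ne_of_mem_of_not_mem i.2 ha]
    · simp
  right_inv y := by
    funext i
    by_cases h : i.1 = a
    · simp only [h, dif_pos]
      exact congrArg y (Subtype.ext h.symm)
    · simp [h]

/-- Stated for paths of every length `k`, so that it also applies to prefixes of a path. -/
def Agrees {n k : ℕ} {s : Finset (Fin n)} (y : {i // i ∈ s} → Bool) (x : Fin k → Bool) : Prop :=
  ∀ i : {i // i ∈ s}, ∀ h : (i : ℕ) < k, x ⟨i, h⟩ = y i

instance {n k : ℕ} {s : Finset (Fin n)} (y : {i // i ∈ s} → Bool) (x : Fin k → Bool) :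
    Decidable (Agrees y x) :=
  inferInstanceAs (Decidable (∀ i : {i // i ∈ s}, ∀ h : (i : ℕ) < k, x ⟨i, h⟩ = y i))

section Projection

variable {n : ℕ} {s : Finset (Fin n)} {a : Fin n}

lemma projDist_eq_sum_agrees (P : (Fin n → Bool) → ℝ) (y : {i // i ∈ s} → Bool) :
    projDist P s y = ∑ x, if Agrees y x then P x else 0 :=
  sum_congr rfl fun _ _ => if_congr ⟨fun h i _ => h i, fun h i => h i i.1.isLt⟩ rfl rfl

lemma agrees_comp_castLE {k l : ℕ} (hkl : k ≤ l) (hs : ∀ i ∈ s, (i : ℕ) < k)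
    (y : {i // i ∈ s} → Bool) (x : Fin l → Bool) :
    Agrees y (x ∘ Fin.castLE hkl) ↔ Agrees y x :=
  ⟨fun h i _ => h i (hs i i.2), fun h i hi => h i (hi.trans_le hkl)⟩

lemma projDist_symPathProb_eq_sum_prefix (q : ℝ) {k : ℕ} (hk : k ≤ n)
    (hs : ∀ i ∈ s, (i : ℕ) < k) (y : {i // i ∈ s} → Bool) :
    projDist (symPathProb q n) s y =
      ∑ x : Fin k → Bool, if Agrees y x then symPathProb q k x else 0 := by
  have h := sum_comp_castLE_mul_symPathProb q hk fun x => if Agrees y x then (1 : ℝ) else 0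
  simp only [boole_mul, agrees_comp_castLE hk hs y] at h
  rw [projDist_eq_sum_agrees, h]

lemma sum_projDist (P : (Fin n → Bool) → ℝ) (s : Finset (Fin n)) :
    ∑ y, projDist P s y = ∑ x, P x := by
  simp only [projDist, ← funext_iff]
  rw [sum_comm]
  simp

lemma agrees_insertEquiv_iff (ha : a ∉ s) (z : ({i // i ∈ s} → Bool) × Bool)
    (x : Fin (a + 1) → Bool) :
    Agrees (insertEquiv ha z) x ↔ Agrees z.1 x ∧ x (Fin.last a) = z.2 := by
  constructor
  · intro h
    refine ⟨fun i hi => ?_, ?_⟩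
    · simpa [insertEquiv, ne_of_mem_of_not_mem i.2 ha] using h ⟨i, mem_insert_of_mem i.2⟩ hi
    · exact (h ⟨a, mem_insert_self a s⟩ a.val.lt_succ_self).trans (by simp [insertEquiv])
  · rintro ⟨h, hlast⟩ i hi
    by_cases hia : i.1 = a
    · have : (⟨i, hi⟩ : Fin (a + 1)) = Fin.last a := Fin.ext (by simp [hia])
      rw [this, hlast]
      simp [insertEquiv, hia]
    · simpa [insertEquiv, hia] using h ⟨i, (mem_insert.mp i.2).resolve_left hia⟩ hi

lemma projDist_empty (P : (Fin n → Bool) → ℝ) (y : {i // i ∈ (∅ : Finset (Fin n))} → Bool) :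
    projDist P ∅ y = ∑ x, P x := by
  simp [projDist]

lemma filter_insert_lt_self (hlt : ∀ x ∈ s, x < a) : (insert a s).filter (· < a) = s := by
  rw [filter_insert, if_neg (lt_irrefl a), filter_true_of_mem hlt]

/-- Crossover probability from the last coordinate of `s` before `j` to `j`; it is `1 / 2` when
there is none, since `X_j` is then uniform. -/
noncomputable def gapParam (q : ℝ) (s : Finset (Fin n)) (j : Fin n) : ℝ :=
  if h : (s.filter (· < j)).Nonempty then bConvPow q (j - (s.filter (· < j)).max' h : ℕ)
  else 1 / 2

lemma gapParam_insert_self (q : ℝ) (hlt : ∀ x ∈ s, x < a) :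
    gapParam q (insert a s) a =
      if h : s.Nonempty then bConvPow q (a - s.max' h : ℕ) else 1 / 2 := by
  simp only [gapParam, filter_insert_lt_self hlt]

lemma gapParam_insert_of_mem (q : ℝ) (hlt : ∀ x ∈ s, x < a) {j : Fin n} (hj : j ∈ s) :
    gapParam q (insert a s) j = gapParam q s j := by
  simp only [gapParam, filter_insert, if_neg (lt_asymm (hlt j hj))]

lemma projDist_insert_eq_sum (q : ℝ) (hlt : ∀ x ∈ s, x < a) (z : ({i // i ∈ s} → Bool) × Bool) :
    projDist (symPathProb q n) (insert a s) (insertEquiv (fun h => lt_irrefl a (hlt a h)) z) =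
      ∑ x : Fin (a + 1) → Bool, (if Agrees z.1 x then 1 else 0) *
        (if x (Fin.last a) = z.2 then 1 else 0) * symPathProb q (a + 1) x := by
  have hs : ∀ i ∈ insert a s, (i : ℕ) < a + 1 := fun i hi =>
    Nat.lt_succ_of_le (Fin.le_def.mp ((mem_insert.mp hi).elim le_of_eq fun h => (hlt i h).le))
  rw [projDist_symPathProb_eq_sum_prefix q a.isLt hs]
  refine sum_congr rfl fun x _ => ?_
  by_cases h₁ : Agrees z.1 x <;> by_cases h₂ : x (Fin.last a) = z.2 <;>
    simp [agrees_insertEquiv_iff, h₁, h₂]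

lemma projDist_insert_of_nonempty (q : ℝ) (hlt : ∀ x ∈ s, x < a) (hs : s.Nonempty)
    (z : ({i // i ∈ s} → Bool) × Bool) :
    projDist (symPathProb q n) (insert a s) (insertEquiv (fun h => lt_irrefl a (hlt a h)) z) =
      projDist (symPathProb q n) s z.1 *
        flipKer (bConvPow q (a - s.max' hs : ℕ)) (z.1 ⟨s.max' hs, max'_mem s hs⟩) z.2 := by
  have hpa : (s.max' hs : ℕ) ≤ a := Fin.le_def.mp (hlt _ (max'_mem s hs)).le
  have hs' : ∀ i ∈ s, (i : ℕ) < s.max' hs + 1 :=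
    fun i hi => Nat.lt_succ_of_le (Fin.le_def.mp (le_max' s i hi))
  rw [projDist_insert_eq_sum q hlt]
  simp only [← agrees_comp_castLE (Nat.succ_le_succ hpa) hs']
  rw [sum_mul_last_mul_symPathProb q hpa (fun x => if Agrees z.1 x then 1 else 0)
    fun b => if b = z.2 then 1 else 0,
    projDist_symPathProb_eq_sum_prefix q (s.max' hs).isLt hs', sum_mul]
  refine sum_congr rfl fun x _ => ?_
  by_cases h : Agrees z.1 x
  · have hlast : x (Fin.last _) = z.1 ⟨s.max' hs, max'_mem s hs⟩ :=
      h ⟨s.max' hs, max'_mem s hs⟩ (Nat.lt_succ_self _)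
    simp only [h, if_true, hlast, mul_ite, mul_one, mul_zero, sum_ite_eq', mem_univ, one_mul]
    ring
  · simp [h]

lemma exists_projDist_insert_eq_mul_flipKer (q : ℝ) (hlt : ∀ x ∈ s, x < a) :
    ∃ f : ({i // i ∈ s} → Bool) → Bool, ∀ z,
      projDist (symPathProb q n) (insert a s) (insertEquiv (fun h => lt_irrefl a (hlt a h)) z) =
        projDist (symPathProb q n) s z.1 * flipKer (gapParam q (insert a s) a) (f z.1) z.2 := by
  rw [gapParam_insert_self q hlt]
  rcases s.eq_empty_or_nonempty with rfl | hs
  · refine ⟨fun _ => true, fun z => ?_⟩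
    have hagree (x : Fin (a + 1) → Bool) : Agrees z.1 x := fun i => absurd i.2 (notMem_empty _)
    simp only [projDist_insert_eq_sum q hlt, hagree, if_true, one_mul]
    rw [sum_last_mul_symPathProb q a fun b => if b = z.2 then 1 else 0, projDist_empty,
      sum_symPathProb]
    cases z.2 <;> norm_num [flipKer]
  · exact ⟨fun y => y ⟨s.max' hs, max'_mem s hs⟩, fun z => by
      rw [dif_pos hs, projDist_insert_of_nonempty q hlt hs]⟩

end Projection

section Entropy

lemma entropyDist_eq_sum_negMulLog {β : Type*} [Fintype β] (p : β → ℝ) :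
    entropyDist p = ∑ b, negMulLog (p b) / log 2 :=
  sum_congr rfl fun _ _ => by rw [negMulLog, logb]; ring

lemma binEnt_eq_binEntropy_div (p : ℝ) : binEnt p = binEntropy p / log 2 := by
  rw [binEnt, binEntropy_eq_negMulLog_add_negMulLog_one_sub, negMulLog, negMulLog, logb, logb]
  ring

lemma binEnt_half : binEnt (1 / 2) = 1 := by
  rw [binEnt_eq_binEntropy_div, one_div, binEntropy_two_inv, div_self (log_pos one_lt_two).ne']

lemma binEnt_mem_Icc {p : ℝ} (hp : p ∈ Set.Icc 0 1) : binEnt p ∈ Set.Icc 0 1 := by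
  rw [binEnt_eq_binEntropy_div]
  have hlog := log_pos one_lt_two
  exact ⟨div_nonneg (binEntropy_nonneg hp.1 hp.2) hlog.le,
    (div_le_one hlog).mpr binEntropy_le_log_two⟩

lemma sum_negMulLog_flipKer (a : ℝ) (b : Bool) :
    ∑ c, negMulLog (flipKer a b c) = binEntropy a := by
  cases b <;> simp [flipKer, binEntropy_eq_negMulLog_add_negMulLog_one_sub, add_comm]

lemma entropyDist_comp_equiv {β γ : Type*} [Fintype β] [Fintype γ] (e : β ≃ γ) (p : γ → ℝ) :
    entropyDist (p ∘ e) = entropyDist p :=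
  e.sum_comp fun c => -(p c * logb 2 (p c))

lemma entropyDist_mul_flipKer {β : Type*} [Fintype β] {P : β → ℝ} (hP : ∑ x, P x = 1)
    (a : ℝ) (f : β → Bool) :
    entropyDist (fun z : β × Bool => P z.1 * flipKer a (f z.1) z.2) = entropyDist P + binEnt a := by
  have hfiber (x : β) :
      ∑ c, negMulLog (P x * flipKer a (f x) c) = negMulLog (P x) + P x * binEntropy a := by
    simp only [negMulLog_mul, sum_add_distrib, ← sum_mul, ← mul_sum, sum_flipKer,
      sum_negMulLog_flipKer, one_mul]
  simp only [entropyDist_eq_sum_negMulLog, Fintype.sum_prod_type, ← sum_div, hfiber,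
    add_div, sum_add_distrib, binEnt_eq_binEntropy_div, ← sum_mul, hP, one_mul]

lemma entropyDist_projDist_empty (q : ℝ) (n : ℕ) :
    entropyDist (projDist (symPathProb q n) (∅ : Finset (Fin n))) = 0 := by
  simp [entropyDist_eq_sum_negMulLog, projDist_empty, sum_symPathProb]

theorem entropyDist_projDist_symPathProb (q : ℝ) {n : ℕ} (s : Finset (Fin n)) :
    entropyDist (projDist (symPathProb q n) s) = ∑ j ∈ s, binEnt (gapParam q s j) := by
  induction s using induction_on_max with
  | empty => simp [entropyDist_projDist_empty]
  | insert a s hlt ih =>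
    have ha : a ∉ s := fun h => lt_irrefl a (hlt a h)
    obtain ⟨f, hf⟩ := exists_projDist_insert_eq_mul_flipKer q hlt
    rw [← entropyDist_comp_equiv (insertEquiv ha), Function.comp_def, funext hf,
      entropyDist_mul_flipKer ((sum_projDist _ s).trans (sum_symPathProb q n)), ih,
      sum_insert ha, add_comm]
    exact congrArg _ (sum_congr rfl fun j hj => by rw [gapParam_insert_of_mem q hlt hj])

end Entropy

section RandomSubset

variable {α : Type*} [DecidableEq α] (lam mu : ℝ)

lemma sum_powerset_insert_weight {a : α} {r : Finset α} (ha : a ∉ r) (F : Finset α → ℝ) :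
    ∑ s ∈ (insert a r).powerset, lam ^ #s * mu ^ (#(insert a r) - #s) * F s =
      mu * ∑ s ∈ r.powerset, lam ^ #s * mu ^ (#r - #s) * F s +
        lam * ∑ s ∈ r.powerset, lam ^ #s * mu ^ (#r - #s) * F (insert a s) := by
  rw [sum_powerset_insert ha, card_insert_of_notMem ha, mul_sum, mul_sum]
  congr 1 <;> refine sum_congr rfl fun s hs => ?_
  · rw [Nat.sub_add_comm (card_le_card (mem_powerset.mp hs)), pow_succ]
    ring
  · rw [card_insert_of_notMem fun h => ha (mem_powerset.mp hs h), Nat.add_sub_add_right, pow_succ]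
    ring

variable {lam mu}

lemma sum_powerset_weight_eq_of_inter (hlm : lam + mu = 1) {t r : Finset α} (htr : t ⊆ r)
    (F : Finset α → ℝ) (hF : ∀ s, F (s ∩ t) = F s) :
    ∑ s ∈ r.powerset, lam ^ #s * mu ^ (#r - #s) * F s =
      ∑ s ∈ t.powerset, lam ^ #s * mu ^ (#t - #s) * F s := by
  suffices ∀ d : Finset α, Disjoint t d → ∑ s ∈ (t ∪ d).powerset,
      lam ^ #s * mu ^ (#(t ∪ d) - #s) * F s = ∑ s ∈ t.powerset, lam ^ #s * mu ^ (#t - #s) * F s by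
    simpa [union_sdiff_of_subset htr] using this (r \ t) disjoint_sdiff
  intro d hd
  induction d using Finset.induction_on with
  | empty => simp
  | insert a d had ih =>
    have hat : a ∉ t := fun h => disjoint_left.mp hd h (mem_insert_self a d)
    have hFa (s : Finset α) : F (insert a s) = F s := by
      rw [← hF, insert_inter_of_notMem hat, hF]
    rw [union_insert, sum_powerset_insert_weight lam mu (by simp [hat, had])]
    simp only [hFa, ih (disjoint_insert_right.mp hd).2, ← add_mul, add_comm mu, hlm, one_mul]

lemma sum_powerset_weight_max [LinearOrder α] (hlm : lam + mu = 1) (φ : α → ℝ) (c : ℝ)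
    (t : Finset α) :
    ∑ u ∈ t.powerset, lam ^ #u * mu ^ (#t - #u) * (if h : u.Nonempty then φ (u.max' h) else c) =
      mu ^ #t * c + ∑ i ∈ t, lam * mu ^ #{k ∈ t | i < k} * φ i := by
  induction t using induction_on_max with
  | empty => simp
  | insert a s hlt ih =>
    have ha : a ∉ s := fun h => lt_irrefl a (hlt a h)
    have hmax (u : Finset α) (hu : u ∈ s.powerset) :
        (if h : (insert a u).Nonempty then φ ((insert a u).max' h) else c) = φ a := by
      rw [dif_pos (insert_nonempty a u)]
      refine congrArg φ (le_antisymm (max'_le _ _ _ fun x hx => ?_)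
        (le_max' _ a (mem_insert_self a u)))
      rcases mem_insert.mp hx with rfl | hx
      exacts [le_rfl, (hlt x (mem_powerset.mp hu hx)).le]
    have hnew : ∑ u ∈ s.powerset, lam ^ #u * mu ^ (#s - #u) *
        (if h : (insert a u).Nonempty then φ ((insert a u).max' h) else c) = φ a := by
      rw [sum_congr rfl fun u hu => by rw [hmax u hu], ← sum_mul, sum_pow_mul_eq_add_pow, hlm,
        one_pow, one_mul]
    have hfilter (i : α) (hi : i ∈ s) : #{k ∈ insert a s | i < k} = #{k ∈ s | i < k} + 1 := by
      rw [filter_insert, if_pos (hlt i hi), card_insert_of_notMem fun h => ha (mem_filter.mp h).1]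
    have hfilter_self : #{k ∈ insert a s | a < k} = 0 := by
      rw [card_eq_zero, filter_insert, if_neg (lt_irrefl a)]
      exact filter_false_of_mem fun x hx => not_lt.mpr (hlt x hx).le
    have hrest : ∑ i ∈ s, lam * mu ^ #{k ∈ insert a s | i < k} * φ i =
        mu * ∑ i ∈ s, lam * mu ^ #{k ∈ s | i < k} * φ i := by
      rw [mul_sum]
      exact sum_congr rfl fun i hi => by rw [hfilter i hi, pow_succ]; ring
    rw [sum_powerset_insert_weight lam mu ha, ih, hnew, sum_insert ha, hfilter_self, hrest,
      card_insert_of_notMem ha, pow_succ, pow_zero]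
    ring

end RandomSubset

/-- `E[binEnt (gapParam q S k) | k ∈ S]`: the last element of `S` before `k` is at distance
`g + 1` with probability `(1 - λ)^g λ`, and there is none with probability `(1 - λ)^k`. -/
noncomputable def expectedGapEntropy (q lam : ℝ) (k : ℕ) : ℝ :=
  (1 - lam) ^ k + ∑ g ∈ range k, (1 - lam) ^ g * lam * binEnt (bConvPow q (g + 1))

lemma sum_Iio_sub_eq_sum_range {n : ℕ} (j : Fin n) (f : ℕ → ℝ) :
    ∑ i ∈ Iio j, f (j - i) = ∑ g ∈ range j, f (g + 1) := by
  rw [← sum_range_reflect, ← Nat.Iio_eq_range, ← Fin.map_valEmbedding_Iio, sum_map]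
  refine sum_congr rfl fun i hi => congrArg f ?_
  have : i < j := mem_Iio.mp hi
  simp only [Fin.valEmbedding_apply]
  omega

lemma card_filter_Iio_lt {n : ℕ} (i j : Fin n) : #{k ∈ Iio j | i < k} = j - i - 1 := by
  rw [← Fin.card_Ioo]
  congr 1
  ext k
  simp [and_comm]

lemma gapParam_inter_of_Iio_subset {n : ℕ} (q : ℝ) (s : Finset (Fin n)) {t : Finset (Fin n)}
    {j : Fin n} (ht : Iio j ⊆ t) : gapParam q (s ∩ t) j = gapParam q s j := by
  have : (s ∩ t).filter (· < j) = s.filter (· < j) := by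
    ext x
    simp only [mem_filter, mem_inter]
    exact ⟨fun h => ⟨h.1.1, h.2⟩, fun h => ⟨⟨h.1, ht (mem_Iio.mpr h.2)⟩, h.2⟩⟩
  simp only [gapParam, this]

lemma sum_weight_mul_binEnt_gapParam (q lam : ℝ) {n : ℕ} (j : Fin n) :
    ∑ s : Finset (Fin n),
        lam ^ #s * (1 - lam) ^ (n - #s) * (if j ∈ s then binEnt (gapParam q s j) else 0) =
      lam * expectedGapEntropy q lam j := by
  have hlm : lam + (1 - lam) = 1 := by ring
  set F : Finset (Fin n) → ℝ := fun s => if j ∈ s then binEnt (gapParam q s j) else 0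
  have hF (s : Finset (Fin n)) : F (s ∩ insert j (Iio j)) = F s := by
    simp only [F, gapParam_inter_of_Iio_subset q s (subset_insert j _), mem_inter,
      mem_insert_self, and_true]
  have hF_insert (u : Finset (Fin n)) (hu : u ∈ (Iio j).powerset) :
      F (insert j u) = if h : u.Nonempty then binEnt (bConvPow q (j - u.max' h : ℕ)) else 1 := by
    simp only [F, mem_insert_self, if_true,
      gapParam_insert_self q fun x hx => mem_Iio.mp (mem_powerset.mp hu hx)]
    split_ifs
    exacts [rfl, binEnt_half]
  have hF_zero (u : Finset (Fin n)) (hu : u ∈ (Iio j).powerset) : F u = 0 :=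
    if_neg fun h => notMem_Iio_self (mem_powerset.mp hu h)
  calc ∑ s : Finset (Fin n), lam ^ #s * (1 - lam) ^ (n - #s) * F s
      = ∑ s ∈ (insert j (Iio j)).powerset,
          lam ^ #s * (1 - lam) ^ (#(insert j (Iio j)) - #s) * F s := by
        rw [← sum_powerset_weight_eq_of_inter hlm (subset_univ _) F hF, powerset_univ, card_univ,
          Fintype.card_fin]
    _ = lam * ∑ u ∈ (Iio j).powerset, lam ^ #u * (1 - lam) ^ (#(Iio j) - #u) *
          (if h : u.Nonempty then binEnt (bConvPow q (j - u.max' h : ℕ)) else 1) := by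
        rw [sum_powerset_insert_weight lam (1 - lam) notMem_Iio_self,
          sum_eq_zero fun u hu => by rw [hF_zero u hu, mul_zero], mul_zero, zero_add,
          sum_congr rfl fun u hu => by rw [hF_insert u hu]]
    _ = lam * expectedGapEntropy q lam j := by
        rw [sum_powerset_weight_max hlm (fun i : Fin n => binEnt (bConvPow q (j - i : ℕ))) 1,
          Fin.card_Iio, mul_one, expectedGapEntropy]
        simp only [card_filter_Iio_lt]
        rw [sum_Iio_sub_eq_sum_range j fun d => lam * (1 - lam) ^ (d - 1) * binEnt (bConvPow q d)]
        simp only [Nat.add_sub_cancel]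
        exact congrArg _ (congrArg _ (sum_congr rfl fun _ _ => by ring))

theorem condEntProj_symPathProb (q lam : ℝ) (n : ℕ) :
    condEntProj lam (symPathProb q n) = lam * ∑ k ∈ range n, expectedGapEntropy q lam k := by
  have hent (s : Finset (Fin n)) : entropyDist (projDist (symPathProb q n) s) =
      ∑ j, if j ∈ s then binEnt (gapParam q s j) else 0 := by
    rw [entropyDist_projDist_symPathProb, Fintype.sum_ite_mem]
  rw [condEntProj]
  simp only [hent, mul_sum]
  rw [sum_comm]
  simp only [sum_weight_mul_binEnt_gapParam, ← mul_sum]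
  rw [Fin.sum_univ_eq_sum_range (expectedGapEntropy q lam)]

lemma tendsto_expectedGapEntropy {q lam : ℝ} (hq0 : 0 ≤ q) (hq1 : q ≤ 1) (hl0 : 0 < lam)
    (hl1 : lam ≤ 1) :
    Tendsto (expectedGapEntropy q lam) atTop
      (nhds (∑' g : ℕ, (1 - lam) ^ g * lam * binEnt (bConvPow q (g + 1)))) := by
  have hmu0 : 0 ≤ 1 - lam := by linarith
  have hmu1 : 1 - lam < 1 := by linarith
  have hbin (g : ℕ) := binEnt_mem_Icc (bConvPow_mem_Icc hq0 hq1 (g + 1))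
  have hsum : Summable fun g : ℕ => (1 - lam) ^ g * lam * binEnt (bConvPow q (g + 1)) :=
    .of_nonneg_of_le (fun g => mul_nonneg (by positivity) (hbin g).1)
      (fun g => mul_le_of_le_one_right (by positivity) (hbin g).2)
      ((summable_geometric_of_lt_one hmu0 hmu1).mul_right lam)
  have h := (tendsto_pow_atTop_nhds_zero_of_lt_one hmu0 hmu1).add hsum.hasSum.tendsto_sum_nat
  rw [zero_add] at h
  exact h

end ProjEntropy

/-- For the stationary symmetric binary Markov process with transition
probability `q ∈ (0,1/2)` and `0 < λ < 1`,
`lim_{n→∞} H(X_S|S)/(λn) = E[h(q^{*G})]` with `G` geometric of parameter `λ`. -/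
theorem proj_entropy_limit_symmetric (q lam : ℝ) (hq : q ∈ Set.Ioo (0:ℝ) (1/2))
    (hlam : lam ∈ Set.Ioo (0:ℝ) 1) :
    Filter.Tendsto (fun n : ℕ => condEntProj lam (symPathProb q n) / (lam * n)) Filter.atTop
      (nhds (∑' g : ℕ, (1 - lam)^g * lam * binEnt ((1 - (1 - 2*q)^(g+1))/2))) := by
  obtain ⟨hq0, hq2⟩ := hq
  obtain ⟨hl0, hl1⟩ := hlam
  refine (ProjEntropy.tendsto_expectedGapEntropy hq0.le (by linarith) hl0 hl1.le).cesaro.congr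
    fun n => ?_
  rw [ProjEntropy.condEntProj_symPathProb, mul_div_mul_left _ _ hl0.ne', div_eq_inv_mul]
end

section
/- Fix α ∈ (0,1/2) and for ε ∈ (0,1/2) let H̄(Y_ε) denote the entropy rate of the hidden Markov process obtained by passing the stationary symmetric binary Markov process with transition probability q = 1/2 - ε through a binary symmetric channel with crossover probability α. Then 1 - H̄(Y_ε) ≤ 2·log₂e·(1-2α)⁴·ε² + O(ε⁴) as ε → 0; that is, there exist C > 0 and ε₀ > 0 such that for all 0 < ε < ε₀, 1 - H̄(Y_ε) ≤ 2·log₂e·(1-2α)⁴·ε² + C·ε⁴. -/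
open Real Filter MeasureTheory

lemma log_quad_nn (v : ℝ) (h0 : 0 ≤ v) (h : v ≤ 1/2) :
    (1+v)*Real.log (1+v) + (1-v)*Real.log (1-v) ≤ v^2 + 5*v^4 := by
  have hv1 : |v| < 1 := by rw [abs_of_nonneg h0]; linarith
  have H1 := Real.abs_log_sub_add_sum_range_le hv1 3
  have hv1' : |(-v)| < 1 := by rwa [abs_neg]
  have H2 := Real.abs_log_sub_add_sum_range_le hv1' 3
  rw [abs_of_nonneg h0] at H1
  rw [abs_neg, abs_of_nonneg h0] at H2
  simp [Finset.sum_range_succ] at H1 H2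
  rw [abs_le] at H1 H2
  have e1 : Real.log (1-v) ≤ -(v + v^2/2 + v^3/3) + 2*v^4 := by
    have := H1.2
    have hd : v^4/(1-v) ≤ 2*v^4 := by
      rw [div_le_iff₀ (by linarith)]
      nlinarith [pow_nonneg h0 4]
    nlinarith [this]
  have e2 : Real.log (1+v) ≤ (v - v^2/2 + v^3/3) + 2*v^4 := by
    have := H2.2
    have hd : v^4/(1-v) ≤ 2*v^4 := by
      rw [div_le_iff₀ (by linarith)]
      nlinarith [pow_nonneg h0 4]
    nlinarith [this]
  nlinarith [e1, e2, pow_nonneg h0 4, pow_nonneg h0 3, sq_nonneg v]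

lemma log_quad (v : ℝ) (hv : |v| ≤ 1/2) :
    (1+v)*Real.log (1+v) + (1-v)*Real.log (1-v) ≤ v^2 + 5*v^4 := by
  rcases le_or_gt 0 v with h0 | h0
  · exact log_quad_nn v h0 (by rw [abs_of_nonneg h0] at hv; exact hv)
  · have := log_quad_nn (-v) (by linarith) (by rw [abs_of_neg h0] at hv; linarith)
    have h1 : 1 + -v = 1 - v := by ring
    have h2 : 1 - -v = 1 + v := by ring
    rw [h1, h2] at this
    nlinarith [this]

lemma ent_lower (v : ℝ) (hv : |v| ≤ 1/2) :
    1 - Real.logb 2 (Real.exp 1) * (v^2/2 + 3*v^4)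
      ≤ -((1+v)/2 * Real.logb 2 ((1+v)/2)) - ((1-v)/2 * Real.logb 2 ((1-v)/2)) := by
  have hv1 : -(1/2) ≤ v ∧ v ≤ 1/2 := abs_le.mp hv
  have hp : (0:ℝ) < 1 + v := by linarith [hv1.1]
  have hm : (0:ℝ) < 1 - v := by linarith [hv1.2]
  have hl2 : (0:ℝ) < Real.log 2 := Real.log_pos (by norm_num)
  have hle : Real.logb 2 (Real.exp 1) = 1 / Real.log 2 := by
    rw [Real.logb, Real.log_exp]
  have h1 : Real.logb 2 ((1+v)/2) = (Real.log (1+v) - Real.log 2) / Real.log 2 := by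
    rw [Real.logb, Real.log_div hp.ne' (by norm_num)]
  have h2 : Real.logb 2 ((1-v)/2) = (Real.log (1-v) - Real.log 2) / Real.log 2 := by
    rw [Real.logb, Real.log_div hm.ne' (by norm_num)]
  rw [h1, h2, hle]
  have key := log_quad v hv
  rw [← sub_nonneg]
  have heq : -((1+v)/2 * ((Real.log (1+v) - Real.log 2) / Real.log 2))
      - (1-v)/2 * ((Real.log (1-v) - Real.log 2) / Real.log 2)
      - (1 - 1 / Real.log 2 * (v^2/2 + 3*v^4))
      = ((v^2 + 6*v^4) - ((1+v)*Real.log (1+v) + (1-v)*Real.log (1-v))) / (2 * Real.log 2) := by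
    field_simp
    ring
  rw [heq]
  apply div_nonneg _ (by positivity)
  nlinarith [key, sq_nonneg (v^2)]

lemma ratio_pair (P D β η : ℝ) (hP : 0 < P) (hD : |D| ≤ P) (hβ0 : 0 < β) (hβ : β < 1)
    (hη0 : 0 ≤ η) (hη : η ≤ 1/2) :
    ((η*D+β*P)/2)^2 / ((P+β*η*D)/2) + ((η*D-β*P)/2)^2 / ((P-β*η*D)/2)
      ≤ β^2*P + η^2*(D^2/P) := by
  have hDl := abs_le.mp hD
  have hbη0 : 0 ≤ β*η := mul_nonneg hβ0.le hη0
  have hbη : β*η ≤ 1/2 := by nlinarith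
  have t1 : 0 ≤ β*η*(D+P) := mul_nonneg hbη0 (by linarith [hDl.1])
  have t1' : 0 ≤ β*η*(P-D) := mul_nonneg hbη0 (by linarith [hDl.2])
  have t2 : β*η*P ≤ (1/2)*P := by nlinarith
  have hden1 : 0 < (P+β*η*D)/2 := by nlinarith
  have hden2 : 0 < (P-β*η*D)/2 := by nlinarith
  have hD2 : D^2 ≤ P^2 := by
    nlinarith [mul_nonneg (by linarith [hDl.2] : (0:ℝ) ≤ P - D) (by linarith [hDl.1] : (0:ℝ) ≤ P + D)]
  have hη2 : η^2 ≤ 1 := by nlinarith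
  have hP2 : P^2 - η^2*D^2 ≥ 0 := by nlinarith [sq_nonneg D, sq_nonneg η]
  have hβ2 : β^2 ≤ 1 := by nlinarith
  have hX : (0:ℝ) ≤ (1-β^2)*P^2 + (P^2 - η^2*D^2) := by
    have := mul_nonneg (by linarith : (0:ℝ) ≤ 1-β^2) (sq_nonneg P)
    linarith
  rw [div_add_div _ _ hden1.ne' hden2.ne', div_le_iff₀ (by positivity)]
  have key : (β^2*P + η^2*(D^2/P)) * ((P+β*η*D)/2 * ((P-β*η*D)/2))
      - (((η*D+β*P)/2)^2 * ((P-β*η*D)/2) + ((η*D-β*P)/2)^2 * ((P+β*η*D)/2))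
      = (β^2*η^2*D^2) * ((1-β^2)*P^2 + (P^2 - η^2*D^2)) / (4*P) := by
    field_simp
    ring
  have hnn : (0:ℝ) ≤ (β^2*η^2*D^2) * ((1-β^2)*P^2 + (P^2 - η^2*D^2)) / (4*P) :=
    div_nonneg (mul_nonneg (by positivity) hX) (by linarith)
  linarith [key, hnn]

lemma entropy_pair (P D β η : ℝ) (hP : 0 < P) (hD : |D| ≤ P) (hβ0 : 0 < β) (hβ : β < 1)
    (hη0 : 0 ≤ η) (hη : η ≤ 1/2) :
    -(P * Real.logb 2 P) + P
      - Real.logb 2 (Real.exp 1) * (β^2*η^2/2 * (D^2/P) + 3*η^4 * P)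
    ≤ -(((P+β*η*D)/2) * Real.logb 2 ((P+β*η*D)/2))
      + -(((P-β*η*D)/2) * Real.logb 2 ((P-β*η*D)/2)) := by
  set v : ℝ := β*η*D/P with hv
  have hDl := abs_le.mp hD
  have hbη0 : 0 ≤ β*η := mul_nonneg hβ0.le hη0
  have hbη : β*η ≤ 1/2 := by nlinarith
  have hvabs : |v| ≤ 1/2 := by
    rw [hv, abs_div, abs_of_pos hP, div_le_iff₀ hP, abs_mul]
    rw [abs_of_nonneg hbη0]
    calc β*η*|D| ≤ (1/2) * P := by
          apply mul_le_mul hbη hD (abs_nonneg D) (by norm_num)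
      _ = 1/2*P := rfl
  have hvDl := abs_le.mp hvabs
  have e1 : (P+β*η*D)/2 = P * ((1+v)/2) := by
    rw [hv]; field_simp
  have e2 : (P-β*η*D)/2 = P * ((1-v)/2) := by
    rw [hv]; field_simp
  have hp1 : (0:ℝ) < (1+v)/2 := by linarith [hvDl.1]
  have hp2 : (0:ℝ) < (1-v)/2 := by linarith [hvDl.2]
  have l1 : Real.logb 2 (P * ((1+v)/2)) = Real.logb 2 P + Real.logb 2 ((1+v)/2) :=
    Real.logb_mul hP.ne' hp1.ne'
  have l2 : Real.logb 2 (P * ((1-v)/2)) = Real.logb 2 P + Real.logb 2 ((1-v)/2) :=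
    Real.logb_mul hP.ne' hp2.ne'
  rw [e1, e2, l1, l2]
  have hent := ent_lower v hvabs
  -- RHS = -(P logb P) + P * (binary-entropy term)
  have hrhs : -(P * ((1+v)/2) * (Real.logb 2 P + Real.logb 2 ((1+v)/2)))
      + -(P * ((1-v)/2) * (Real.logb 2 P + Real.logb 2 ((1-v)/2)))
      = -(P * Real.logb 2 P)
        + P * (-((1+v)/2 * Real.logb 2 ((1+v)/2)) - ((1-v)/2 * Real.logb 2 ((1-v)/2))) := by
    ring
  rw [hrhs]
  have hmono : P * (1 - Real.logb 2 (Real.exp 1) * (v^2/2 + 3*v^4))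
      ≤ P * (-((1+v)/2 * Real.logb 2 ((1+v)/2)) - ((1-v)/2 * Real.logb 2 ((1-v)/2))) :=
    mul_le_mul_of_nonneg_left hent hP.le
  have hexp : (1:ℝ) < Real.exp 1 := by nlinarith [Real.add_one_le_exp (1:ℝ)]
  have hL : 0 < Real.logb 2 (Real.exp 1) := Real.logb_pos (by norm_num) hexp
  -- compare the error terms
  have hv2 : P * v^2 = β^2*η^2 * (D^2/P) := by
    rw [hv]; field_simp
  have hv4 : P * v^4 ≤ η^4 * P := by
    have h1 : |v| ≤ η := by
      rw [hv, abs_div, abs_of_pos hP, div_le_iff₀ hP, abs_mul, abs_of_nonneg hbη0]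
      calc β*η*|D| ≤ 1*η*P := by
            apply mul_le_mul (by nlinarith [abs_nonneg D]) hD (abs_nonneg D) (by positivity)
        _ = η * P := by ring
    have hv4' : v^4 ≤ η^4 := by
      calc v^4 = |v|^4 := by rw [← abs_pow, abs_of_nonneg (by positivity)]
        _ ≤ η^4 := pow_le_pow_left₀ (abs_nonneg v) h1 4
    rw [mul_comm (η^4) P]
    exact mul_le_mul_of_nonneg_left hv4' hP.le
  have hcore : P * (v^2/2 + 3*v^4) ≤ β^2*η^2/2 * (D^2/P) + 3*η^4 * P := by
    have e : P * (v^2/2 + 3*v^4) = (P*v^2)/2 + 3*(P*v^4) := by ring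
    rw [e, hv2]
    linarith [hv4]
  have herr : P * (Real.logb 2 (Real.exp 1) * (v^2/2 + 3*v^4))
      ≤ Real.logb 2 (Real.exp 1) * (β^2*η^2/2 * (D^2/P) + 3*η^4 * P) := by
    have h' := mul_le_mul_of_nonneg_left hcore hL.le
    have e : P * (Real.logb 2 (Real.exp 1) * (v^2/2 + 3*v^4))
        = Real.logb 2 (Real.exp 1) * (P * (v^2/2 + 3*v^4)) := by ring
    rw [e]; exact h'
  linarith [hmono, herr]


theorem ent_le_card (n : ℕ) (p : (Fin n → Bool) → ℝ) (hp : ∀ y, 0 < p y)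
    (hs : ∑ y, p y = 1) : entropyDist p ≤ n := by
  have hl2 : (0:ℝ) < Real.log 2 := Real.log_pos (by norm_num)
  set u : ℝ := ((2:ℝ)^n)⁻¹ with hu
  have hu0 : 0 < u := by positivity
  have key : ∀ y, -(p y * Real.log (p y)) ≤ -(p y * Real.log u) + u - p y := by
    intro y
    have h1 : Real.log (u / p y) ≤ u / p y - 1 :=
      Real.log_le_sub_one_of_pos (div_pos hu0 (hp y))
    rw [Real.log_div hu0.ne' (hp y).ne'] at h1
    have h2 := mul_le_mul_of_nonneg_left h1 (hp y).le
    have h3 : p y * (u / p y) = u := by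
      rw [mul_comm, div_mul_cancel₀ _ (hp y).ne']
    nlinarith [h2, h3]
  have hcard : ((Fintype.card (Fin n → Bool)) : ℝ) = 2^n := by
    rw [Fintype.card_fun]
    simp
  have h4 : ∑ y : Fin n → Bool, -(p y * Real.log u) = -Real.log u := by
    rw [Finset.sum_neg_distrib, ← Finset.sum_mul, hs, one_mul]
  have h5 : ∑ _y : Fin n → Bool, u = (2:ℝ)^n * u := by
    rw [Finset.sum_const, nsmul_eq_mul, Finset.card_univ, hcard]
  have h6 : ∑ y : Fin n → Bool, (-(p y * Real.log u) + u - p y) = n * Real.log 2 := by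
    rw [Finset.sum_sub_distrib, Finset.sum_add_distrib, hs, h4, h5,
      mul_inv_cancel₀ (by positivity : ((2:ℝ)^n) ≠ 0)]
    rw [hu, Real.log_inv, Real.log_pow]
    push_cast
    ring
  have h7 : ∑ y : Fin n → Bool, -(p y * Real.log (p y)) ≤ n * Real.log 2 := by
    rw [← h6]
    exact Finset.sum_le_sum fun y _ => key y
  have h8 : entropyDist p = (∑ y : Fin n → Bool, -(p y * Real.log (p y))) / Real.log 2 := by
    rw [entropyDist, Finset.sum_div]
    apply Finset.sum_congr rfl
    intro y _
    rw [Real.logb]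
    ring
  rw [h8, div_le_iff₀ hl2]
  linarith [h7]



noncomputable def jointG (q a : ℝ) : (n : ℕ) → (Fin (n+1) → Bool) → Bool → ℝ
  | 0, y, x => (1/2) * (if y 0 = x then 1 - a else a)
  | n+1, y, x =>
      (∑ x₀ : Bool, jointG q a n (fun i => y i.castSucc) x₀ * (if x₀ = x then 1 - q else q))
        * (if y (Fin.last (n+1)) = x then 1 - a else a)

def snocEquiv (n : ℕ) : ((Fin (n+1) → Bool) × Bool) ≃ (Fin (n+2) → Bool) where
  toFun p := Fin.snoc p.1 p.2
  invFun f := (fun i => f i.castSucc, f (Fin.last (n+1)))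
  left_inv p := by
    ext i
    · simp
    · simp
  right_inv f := Fin.snoc_init_self f

@[simp] lemma snocEquiv_apply {n : ℕ} (zs : Fin (n+1) → Bool) (b : Bool) :
    snocEquiv n (zs, b) = Fin.snoc zs b := rfl

lemma sum_fin1 (f : (Fin 1 → Bool) → ℝ) :
    ∑ y, f y = f (fun _ => true) + f (fun _ => false) := by
  rw [← Equiv.sum_comp (Equiv.funUnique (Fin 1) Bool).symm, Fintype.sum_bool]
  rfl

lemma snoc_mk_lt {n : ℕ} (zs : Fin (n+1) → Bool) (b : Bool) (iv : ℕ) (h2 : iv < n+2)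
    (h1 : iv < n+1) : (Fin.snoc zs b : Fin (n+2) → Bool) ⟨iv, h2⟩ = zs ⟨iv, h1⟩ := by
  have : (⟨iv, h2⟩ : Fin (n+2)) = (⟨iv, h1⟩ : Fin (n+1)).castSucc := rfl
  rw [this, Fin.snoc_castSucc]

lemma snoc_mk_last {n : ℕ} (zs : Fin (n+1) → Bool) (b : Bool) (h2 : n+1 < n+2) :
    (Fin.snoc zs b : Fin (n+2) → Bool) ⟨n+1, h2⟩ = b := by
  have : (⟨n+1, h2⟩ : Fin (n+2)) = Fin.last (n+1) := rfl
  rw [this, Fin.snoc_last]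

lemma symPathProb_one' (q : ℝ) (x : Fin 1 → Bool) : symPathProb q 1 x = 1/2 := by
  simp [symPathProb]

lemma symPathProb_snoc (q : ℝ) (n : ℕ) (zs : Fin (n+1) → Bool) (b : Bool) :
    symPathProb q (n+2) (Fin.snoc zs b)
      = symPathProb q (n+1) zs * (if zs (Fin.last n) = b then 1 - q else q) := by
  rw [symPathProb, symPathProb, Fin.prod_univ_castSucc]
  congr 1
  · apply Finset.prod_congr rfl
    intro i _
    rcases i with ⟨iv, hiv⟩
    show (if iv = 0 then (1/2:ℝ)
        else if (Fin.snoc zs b : Fin (n+2) → Bool) ⟨iv - 1, by omega⟩ = (Fin.snoc zs b : Fin (n+2) → Bool) ⟨iv, by omega⟩ then 1-q else q)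
      = (if iv = 0 then (1/2:ℝ)
        else if zs (⟨iv - 1, by omega⟩ : Fin (n+1)) = zs ⟨iv, hiv⟩ then 1-q else q)
    by_cases h0 : iv = 0
    · rw [if_pos h0, if_pos h0]
    · rw [if_neg h0, if_neg h0,
        snoc_mk_lt zs b (iv-1) (by omega) (by omega), snoc_mk_lt zs b iv (by omega) hiv]
  · show (if n+1 = 0 then (1/2:ℝ)
        else if (Fin.snoc zs b : Fin (n+2) → Bool) ⟨n+1-1, by omega⟩ = (Fin.snoc zs b : Fin (n+2) → Bool) ⟨n+1, by omega⟩ then 1-q else q)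
      = (if zs (Fin.last n) = b then 1-q else q)
    rw [if_neg (Nat.succ_ne_zero n),
      snoc_mk_lt zs b (n+1-1) (by omega) (by omega), snoc_mk_last zs b (by omega)]
    rfl

lemma jointG_eq (q a : ℝ) : ∀ (n : ℕ) (y : Fin (n+1) → Bool) (x : Bool),
    jointG q a n y x = ∑ xs : Fin (n+1) → Bool,
      (if xs (Fin.last n) = x then
        symPathProb q (n+1) xs * ∏ i, (if y i = xs i then 1-a else a) else 0) := by
  intro n
  induction n with
  | zero =>
    intro y x
    rw [← Equiv.sum_comp (Equiv.funUnique (Fin 1) Bool).symm]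
    rw [Fintype.sum_bool]
    simp only [Equiv.funUnique_symm_apply]
    show jointG q a 0 y x
      = (if true = x then symPathProb q 1 (fun _ => true) * ∏ i : Fin 1, (if y i = true then 1-a else a) else 0)
      + (if false = x then symPathProb q 1 (fun _ => false) * ∏ i : Fin 1, (if y i = false then 1-a else a) else 0)
    rw [symPathProb_one', symPathProb_one', Fin.prod_univ_one, Fin.prod_univ_one]
    show (1/2) * (if y 0 = x then 1 - a else a) = _
    cases x <;> simp
  | succ n IH =>
    intro y x
    rw [← Equiv.sum_comp (snocEquiv n), Fintype.sum_prod_type]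
    have hF : ∀ (zs : Fin (n+1) → Bool) (b : Bool),
        (if (snocEquiv n (zs, b)) (Fin.last (n+1)) = x then
          symPathProb q (n+2) (snocEquiv n (zs, b))
            * ∏ i : Fin (n+2), (if y i = (snocEquiv n (zs, b)) i then 1-a else a) else 0)
        = (if b = x then (symPathProb q (n+1) zs * (if zs (Fin.last n) = b then 1-q else q))
            * ((∏ i : Fin (n+1), (if y i.castSucc = zs i then 1-a else a))
               * (if y (Fin.last (n+1)) = b then 1-a else a)) else 0) := by
      intro zs b
      show (if (Fin.snoc zs b : Fin (n+2) → Bool) (Fin.last (n+1)) = x then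
          symPathProb q (n+2) (Fin.snoc zs b)
            * ∏ i : Fin (n+2), (if y i = (Fin.snoc zs b : Fin (n+2) → Bool) i then 1-a else a) else 0) = _
      rw [Fin.snoc_last, symPathProb_snoc, Fin.prod_univ_castSucc]
      simp only [Fin.snoc_castSucc, Fin.snoc_last]
    simp only [hF]
    have hinner : ∀ zs : Fin (n+1) → Bool,
        (∑ b : Bool, (if b = x then (symPathProb q (n+1) zs * (if zs (Fin.last n) = b then 1-q else q))
            * ((∏ i : Fin (n+1), (if y i.castSucc = zs i then 1-a else a))
               * (if y (Fin.last (n+1)) = b then 1-a else a)) else 0))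
        = (symPathProb q (n+1) zs * (if zs (Fin.last n) = x then 1-q else q))
            * ((∏ i : Fin (n+1), (if y i.castSucc = zs i then 1-a else a))
               * (if y (Fin.last (n+1)) = x then 1-a else a)) := by
      intro zs
      rw [Fintype.sum_bool]
      cases x <;> simp
    simp only [hinner]
    show (∑ x₀ : Bool, jointG q a n (fun i => y i.castSucc) x₀ * (if x₀ = x then 1 - q else q))
        * (if y (Fin.last (n+1)) = x then 1 - a else a) = _
    simp only [IH]
    rw [Fintype.sum_bool, Finset.sum_mul, Finset.sum_mul, ← Finset.sum_add_distrib,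
      Finset.sum_mul]
    refine Finset.sum_congr rfl fun zs _ => ?_
    cases hz : zs (Fin.last n) <;> simp [hz] <;> ring

noncomputable def pG (q a : ℝ) (n : ℕ) (y : Fin (n+1) → Bool) : ℝ :=
  jointG q a n y true + jointG q a n y false

noncomputable def dG (q a : ℝ) (n : ℕ) (y : Fin (n+1) → Bool) : ℝ :=
  jointG q a n y true - jointG q a n y false

lemma bsc_eq (q a : ℝ) (n : ℕ) (y : Fin (n+1) → Bool) :
    bscOutput a (symPathProb q (n+1)) y = pG q a n y := by
  rw [pG, jointG_eq, jointG_eq, ← Finset.sum_add_distrib, bscOutput]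
  apply Finset.sum_congr rfl
  intro xs _
  cases h : xs (Fin.last n) <;> simp [h]

lemma jointG_pos (q a : ℝ) (ha : 0 < a) (ha1 : a < 1) (hq : 0 < q) (hq1 : q < 1) :
    ∀ (n : ℕ) (y : Fin (n+1) → Bool) (x : Bool), 0 < jointG q a n y x := by
  intro n
  induction n with
  | zero =>
    intro y x
    show (0:ℝ) < (1/2) * (if y 0 = x then 1 - a else a)
    have : (0:ℝ) < (if y 0 = x then 1 - a else a) := by split <;> linarith
    linarith
  | succ n IH =>
    intro y x
    show (0:ℝ) < (∑ x₀ : Bool, jointG q a n (fun i => y i.castSucc) x₀ * (if x₀ = x then 1 - q else q))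
        * (if y (Fin.last (n+1)) = x then 1 - a else a)
    rw [Fintype.sum_bool]
    have h1 := IH (fun i => y i.castSucc) true
    have h2 := IH (fun i => y i.castSucc) false
    have e1 : (0:ℝ) < (if true = x then 1 - q else q) := by split <;> linarith
    have e2 : (0:ℝ) < (if false = x then 1 - q else q) := by split <;> linarith
    have e3 : (0:ℝ) < (if y (Fin.last (n+1)) = x then 1 - a else a) := by split <;> linarith
    have := add_pos (mul_pos h1 e1) (mul_pos h2 e2)
    exact mul_pos this e3

lemma pG_pos (q a : ℝ) (ha : 0 < a) (ha1 : a < 1) (hq : 0 < q) (hq1 : q < 1)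
    (n : ℕ) (y : Fin (n+1) → Bool) : 0 < pG q a n y :=
  add_pos (jointG_pos q a ha ha1 hq hq1 n y true) (jointG_pos q a ha ha1 hq hq1 n y false)

lemma dG_abs (q a : ℝ) (ha : 0 < a) (ha1 : a < 1) (hq : 0 < q) (hq1 : q < 1)
    (n : ℕ) (y : Fin (n+1) → Bool) : |dG q a n y| ≤ pG q a n y := by
  have h1 := jointG_pos q a ha ha1 hq hq1 n y true
  have h2 := jointG_pos q a ha ha1 hq hq1 n y false
  rw [dG, pG, abs_le]
  constructor <;> linarith

lemma ite_tt (A B : ℝ) : (if true = true then A else B) = A := rfl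
lemma ite_ft (A B : ℝ) : (if false = true then A else B) = B := rfl
lemma ite_tf (A B : ℝ) : (if true = false then A else B) = B := rfl
lemma ite_ff (A B : ℝ) : (if false = false then A else B) = A := rfl

lemma jointG_snoc (q a : ℝ) (n : ℕ) (zs : Fin (n+1) → Bool) (b x : Bool) :
    jointG q a (n+1) (Fin.snoc zs b) x
      = (jointG q a n zs true * (if true = x then 1-q else q)
          + jointG q a n zs false * (if false = x then 1-q else q))
        * (if b = x then 1-a else a) := by
  show (∑ x₀ : Bool, jointG q a n (fun i => (Fin.snoc zs b : Fin (n+2) → Bool) i.castSucc) x₀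
      * (if x₀ = x then 1 - q else q))
      * (if (Fin.snoc zs b : Fin (n+2) → Bool) (Fin.last (n+1)) = x then 1 - a else a) = _
  have hcast : (fun i : Fin (n+1) => (Fin.snoc zs b : Fin (n+2) → Bool) i.castSucc) = zs := by
    funext i
    simp
  rw [hcast, Fin.snoc_last, Fintype.sum_bool]

lemma pG_snoc_true (q a : ℝ) (n : ℕ) (zs : Fin (n+1) → Bool) :
    pG q a (n+1) (Fin.snoc zs true)
      = (pG q a n zs + (1-2*a)*(1-2*q) * dG q a n zs)/2 := by
  rw [pG, jointG_snoc, jointG_snoc, pG, dG]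
  norm_num
  ring

lemma pG_snoc_false (q a : ℝ) (n : ℕ) (zs : Fin (n+1) → Bool) :
    pG q a (n+1) (Fin.snoc zs false)
      = (pG q a n zs - (1-2*a)*(1-2*q) * dG q a n zs)/2 := by
  rw [pG, jointG_snoc, jointG_snoc, pG, dG]
  norm_num
  ring

lemma dG_snoc_true (q a : ℝ) (n : ℕ) (zs : Fin (n+1) → Bool) :
    dG q a (n+1) (Fin.snoc zs true)
      = ((1-2*q) * dG q a n zs + (1-2*a) * pG q a n zs)/2 := by
  rw [dG, jointG_snoc, jointG_snoc, pG, dG]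
  norm_num
  ring

lemma dG_snoc_false (q a : ℝ) (n : ℕ) (zs : Fin (n+1) → Bool) :
    dG q a (n+1) (Fin.snoc zs false)
      = ((1-2*q) * dG q a n zs - (1-2*a) * pG q a n zs)/2 := by
  rw [dG, jointG_snoc, jointG_snoc, pG, dG]
  norm_num
  ring

lemma sum_pG (q a : ℝ) : ∀ n : ℕ, ∑ y : Fin (n+1) → Bool, pG q a n y = 1 := by
  intro n
  induction n with
  | zero =>
    rw [sum_fin1]
    show (jointG q a 0 _ true + jointG q a 0 _ false) + (jointG q a 0 _ true + jointG q a 0 _ false) = 1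
    show ((1/2) * (if true = true then 1-a else a) + (1/2) * (if true = false then 1-a else a))
      + ((1/2) * (if false = true then 1-a else a) + (1/2) * (if false = false then 1-a else a)) = 1
    norm_num
    ring
  | succ n IH =>
    rw [← Equiv.sum_comp (snocEquiv n), Fintype.sum_prod_type]
    have : ∀ zs : Fin (n+1) → Bool,
        (∑ b : Bool, pG q a (n+1) (snocEquiv n (zs, b))) = pG q a n zs := by
      intro zs
      rw [Fintype.sum_bool, snocEquiv_apply, snocEquiv_apply, pG_snoc_true, pG_snoc_false]
      ring
    rw [Finset.sum_congr rfl fun zs _ => this zs, IH]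

section main

variable {a e : ℝ}

lemma A_triv (ha : 0 < a) (ha1 : a < 1) (hq : 0 < (1/2 - e)) (hq1 : (1/2 - e) < 1) (n : ℕ) :
    ∑ y : Fin (n+1) → Bool, (dG (1/2-e) a n y)^2 / pG (1/2-e) a n y ≤ 1 := by
  have hpt : ∀ y : Fin (n+1) → Bool,
      (dG (1/2-e) a n y)^2 / pG (1/2-e) a n y ≤ pG (1/2-e) a n y := by
    intro y
    have hp := pG_pos (1/2-e) a ha ha1 hq hq1 n y
    have hd := dG_abs (1/2-e) a ha ha1 hq hq1 n y
    rw [div_le_iff₀ hp]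
    have h1 : (dG (1/2-e) a n y)^2 = |dG (1/2-e) a n y|^2 := (sq_abs _).symm
    nlinarith [abs_nonneg (dG (1/2-e) a n y)]
  calc ∑ y : Fin (n+1) → Bool, (dG (1/2-e) a n y)^2 / pG (1/2-e) a n y
      ≤ ∑ y : Fin (n+1) → Bool, pG (1/2-e) a n y := Finset.sum_le_sum fun y _ => hpt y
    _ = 1 := sum_pG _ _ _

lemma A_bound (ha : 0 < a) (ha2 : a < 1/2) (he : 0 < e) (he2 : e ≤ 1/4) (n : ℕ) :
    ∑ y : Fin (n+1) → Bool, (dG (1/2-e) a n y)^2 / pG (1/2-e) a n y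
      ≤ (1-2*a)^2 + (2*e)^2 := by
  have ha1 : a < 1 := by linarith
  have hq : 0 < (1/2 - e) := by linarith
  have hq1 : (1/2 - e) < 1 := by linarith
  cases n with
  | zero =>
    rw [sum_fin1]
    have hpt : pG (1/2-e) a 0 (fun _ => true) = 1/2 := by
      show (1/2) * (if true = true then 1-a else a) + (1/2) * (if true = false then 1-a else a) = 1/2
      norm_num
      ring
    have hpf : pG (1/2-e) a 0 (fun _ => false) = 1/2 := by
      show (1/2) * (if false = true then 1-a else a) + (1/2) * (if false = false then 1-a else a) = 1/2
      norm_num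
      ring
    have hdt : dG (1/2-e) a 0 (fun _ => true) = (1-2*a)/2 := by
      show (1/2) * (if true = true then 1-a else a) - (1/2) * (if true = false then 1-a else a) = (1-2*a)/2
      norm_num
      ring
    have hdf : dG (1/2-e) a 0 (fun _ => false) = -((1-2*a)/2) := by
      show (1/2) * (if false = true then 1-a else a) - (1/2) * (if false = false then 1-a else a) = -((1-2*a)/2)
      norm_num
      ring
    rw [hpt, hpf, hdt, hdf]
    have : ((1-2*a)/2)^2/(1/2:ℝ) + (-((1-2*a)/2))^2/(1/2:ℝ) = (1-2*a)^2 := by ring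
    rw [this]
    nlinarith [sq_nonneg (2*e)]
  | succ m =>
    have heq : (1 - 2*(1/2 - e)) = 2*e := by ring
    rw [← Equiv.sum_comp (snocEquiv m), Fintype.sum_prod_type]
    have hpt : ∀ zs : Fin (m+1) → Bool,
        (∑ b : Bool, (dG (1/2-e) a (m+1) (snocEquiv m (zs, b)))^2
            / pG (1/2-e) a (m+1) (snocEquiv m (zs, b)))
        ≤ (1-2*a)^2 * pG (1/2-e) a m zs
          + (2*e)^2 * ((dG (1/2-e) a m zs)^2 / pG (1/2-e) a m zs) := by
      intro zs
      rw [Fintype.sum_bool, snocEquiv_apply, snocEquiv_apply,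
        pG_snoc_true, pG_snoc_false, dG_snoc_true, dG_snoc_false, heq]
      exact ratio_pair (pG (1/2-e) a m zs) (dG (1/2-e) a m zs) (1-2*a) (2*e)
        (pG_pos _ _ ha ha1 hq hq1 m zs) (dG_abs _ _ ha ha1 hq hq1 m zs)
        (by linarith) (by linarith) (by linarith) (by linarith)
    calc ∑ zs : Fin (m+1) → Bool, (∑ b : Bool, (dG (1/2-e) a (m+1) (snocEquiv m (zs, b)))^2
            / pG (1/2-e) a (m+1) (snocEquiv m (zs, b)))
        ≤ ∑ zs : Fin (m+1) → Bool, ((1-2*a)^2 * pG (1/2-e) a m zs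
            + (2*e)^2 * ((dG (1/2-e) a m zs)^2 / pG (1/2-e) a m zs)) :=
          Finset.sum_le_sum fun zs _ => hpt zs
      _ = (1-2*a)^2 * (∑ zs : Fin (m+1) → Bool, pG (1/2-e) a m zs)
          + (2*e)^2 * (∑ zs : Fin (m+1) → Bool, (dG (1/2-e) a m zs)^2 / pG (1/2-e) a m zs) := by
          rw [Finset.sum_add_distrib, Finset.mul_sum, Finset.mul_sum]
      _ ≤ (1-2*a)^2 * 1 + (2*e)^2 * 1 := by
          have h1 := sum_pG (1/2-e) a m
          have h2 := A_triv ha ha1 hq hq1 m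
          have h3 : (0:ℝ) ≤ (2*e)^2 := sq_nonneg _
          rw [h1]
          nlinarith [h2, h3]
      _ = (1-2*a)^2 + (2*e)^2 := by ring

lemma H_one (ha : 0 < a) (ha1 : a < 1) :
    entropyDist (bscOutput a (symPathProb (1/2-e) 1)) = 1 := by
  have hval : ∀ y : Fin 1 → Bool, bscOutput a (symPathProb (1/2-e) 1) y = 1/2 := by
    intro y
    rw [bsc_eq]
    show (1/2) * (if y 0 = true then 1-a else a) + (1/2) * (if y 0 = false then 1-a else a) = 1/2
    cases h : y 0 <;> (norm_num; ring)
  rw [entropyDist]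
  rw [Finset.sum_congr rfl fun y _ => by rw [hval y]]
  rw [sum_fin1 (fun _ => -((1:ℝ)/2 * Real.logb 2 (1/2)))]
  have : Real.logb 2 (1/2 : ℝ) = -1 := by
    rw [one_div, Real.logb_inv, Real.logb_self_eq_one (by norm_num)]
  rw [this]
  norm_num

lemma step_ent (ha : 0 < a) (ha2 : a < 1/2) (he : 0 < e) (he2 : e ≤ 1/4) (n : ℕ) :
    entropyDist (bscOutput a (symPathProb (1/2-e) (n+1))) + 1
      - Real.logb 2 (Real.exp 1)
        * ((1-2*a)^2*(2*e)^2/2 * ((1-2*a)^2+(2*e)^2) + 3*(2*e)^4)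
    ≤ entropyDist (bscOutput a (symPathProb (1/2-e) (n+2))) := by
  have ha1 : a < 1 := by linarith
  have hq : 0 < (1/2 - e) := by linarith
  have hq1 : (1/2 - e) < 1 := by linarith
  have heq : (1 - 2*(1/2 - e)) = 2*e := by ring
  have hexp : (1:ℝ) < Real.exp 1 := by nlinarith [Real.add_one_le_exp (1:ℝ)]
  have hL : 0 < Real.logb 2 (Real.exp 1) := Real.logb_pos (by norm_num) hexp
  set L := Real.logb 2 (Real.exp 1) with hLdef
  -- expand the (n+2)-entropy over snoc pairs
  have hsplit : entropyDist (bscOutput a (symPathProb (1/2-e) (n+2)))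
      = ∑ zs : Fin (n+1) → Bool,
          (-(pG (1/2-e) a (n+1) (Fin.snoc zs true)
              * Real.logb 2 (pG (1/2-e) a (n+1) (Fin.snoc zs true)))
          + -(pG (1/2-e) a (n+1) (Fin.snoc zs false)
              * Real.logb 2 (pG (1/2-e) a (n+1) (Fin.snoc zs false)))) := by
    rw [entropyDist]
    rw [Finset.sum_congr rfl fun y _ => by rw [bsc_eq (1/2-e) a (n+1) y]]
    rw [← Equiv.sum_comp (snocEquiv n)
      (fun y => -(pG (1/2-e) a (n+1) y * Real.logb 2 (pG (1/2-e) a (n+1) y))),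
      Fintype.sum_prod_type]
    apply Finset.sum_congr rfl
    intro zs _
    rw [Fintype.sum_bool, snocEquiv_apply, snocEquiv_apply]
  -- expand the (n+1)-entropy
  have hsplit' : entropyDist (bscOutput a (symPathProb (1/2-e) (n+1)))
      = ∑ zs : Fin (n+1) → Bool,
          -(pG (1/2-e) a n zs * Real.logb 2 (pG (1/2-e) a n zs)) := by
    rw [entropyDist]
    exact Finset.sum_congr rfl fun y _ => by rw [bsc_eq (1/2-e) a n y]
  rw [hsplit, hsplit']
  have hpt : ∀ zs : Fin (n+1) → Bool,
      -(pG (1/2-e) a n zs * Real.logb 2 (pG (1/2-e) a n zs)) + pG (1/2-e) a n zs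
        - L * ((1-2*a)^2*(2*e)^2/2 * ((dG (1/2-e) a n zs)^2 / pG (1/2-e) a n zs)
            + 3*(2*e)^4 * pG (1/2-e) a n zs)
      ≤ -(pG (1/2-e) a (n+1) (Fin.snoc zs true)
            * Real.logb 2 (pG (1/2-e) a (n+1) (Fin.snoc zs true)))
        + -(pG (1/2-e) a (n+1) (Fin.snoc zs false)
            * Real.logb 2 (pG (1/2-e) a (n+1) (Fin.snoc zs false))) := by
    intro zs
    rw [pG_snoc_true, pG_snoc_false, heq]
    exact entropy_pair (pG (1/2-e) a n zs) (dG (1/2-e) a n zs) (1-2*a) (2*e)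
      (pG_pos _ _ ha ha1 hq hq1 n zs) (dG_abs _ _ ha ha1 hq hq1 n zs)
      (by linarith) (by linarith) (by linarith) (by linarith)
  have hsum := Finset.sum_le_sum (fun zs (_ : zs ∈ Finset.univ) => hpt zs)
  -- compute the lower-bound sum
  have hcompute : ∑ zs : Fin (n+1) → Bool,
      (-(pG (1/2-e) a n zs * Real.logb 2 (pG (1/2-e) a n zs)) + pG (1/2-e) a n zs
        - L * ((1-2*a)^2*(2*e)^2/2 * ((dG (1/2-e) a n zs)^2 / pG (1/2-e) a n zs)
            + 3*(2*e)^4 * pG (1/2-e) a n zs))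
      = (∑ zs : Fin (n+1) → Bool, -(pG (1/2-e) a n zs * Real.logb 2 (pG (1/2-e) a n zs)))
        + 1
        - (L * ((1-2*a)^2*(2*e)^2/2)
            * (∑ zs : Fin (n+1) → Bool, (dG (1/2-e) a n zs)^2 / pG (1/2-e) a n zs)
          + L * (3*(2*e)^4)) := by
    rw [Finset.sum_sub_distrib, Finset.sum_add_distrib, sum_pG]
    congr 1
    have : ∀ zs : Fin (n+1) → Bool,
        L * ((1-2*a)^2*(2*e)^2/2 * ((dG (1/2-e) a n zs)^2 / pG (1/2-e) a n zs)
            + 3*(2*e)^4 * pG (1/2-e) a n zs)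
        = L * ((1-2*a)^2*(2*e)^2/2) * ((dG (1/2-e) a n zs)^2 / pG (1/2-e) a n zs)
          + L * (3*(2*e)^4) * pG (1/2-e) a n zs := by
      intro zs; ring
    rw [Finset.sum_congr rfl fun zs _ => this zs, Finset.sum_add_distrib,
      ← Finset.mul_sum, ← Finset.mul_sum, sum_pG, mul_one]
  rw [hcompute] at hsum
  have hA := A_bound ha ha2 he he2 n
  have hc1 : 0 ≤ L * ((1-2*a)^2*(2*e)^2/2) := by positivity
  have hfinal : L * ((1-2*a)^2*(2*e)^2/2)
      * (∑ zs : Fin (n+1) → Bool, (dG (1/2-e) a n zs)^2 / pG (1/2-e) a n zs)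
      ≤ L * ((1-2*a)^2*(2*e)^2/2) * ((1-2*a)^2+(2*e)^2) :=
    mul_le_mul_of_nonneg_left hA hc1
  have hexpand : L * ((1-2*a)^2*(2*e)^2/2) * ((1-2*a)^2+(2*e)^2) + L * (3*(2*e)^4)
      = L * ((1-2*a)^2*(2*e)^2/2 * ((1-2*a)^2+(2*e)^2) + 3*(2*e)^4) := by ring
  linarith [hsum, hfinal]

set_option maxHeartbeats 1000000 in
/-- Fast transitions regime: for fixed `α ∈ (0,1/2)` and `q = 1/2 - ε`,
`1 - H̄(Y_ε) ≤ 2·log₂e·(1-2α)⁴·ε² + O(ε⁴)`. -/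
theorem fast_transitions_upper_bound (a : ℝ) (ha : a ∈ Set.Ioo (0:ℝ) (1/2)) :
    ∃ C > (0:ℝ), ∃ e₀ > (0:ℝ), ∀ e : ℝ, 0 < e → e < e₀ → e < 1/2 →
      1 - (Filter.atTop.liminf (fun n : ℕ =>
          entropyDist (bscOutput a (symPathProb (1/2 - e) n)) / n))
        ≤ 2 * Real.logb 2 (Real.exp 1) * (1 - 2*a)^4 * e^2 + C * e^4 := by
  obtain ⟨ha0, ha2⟩ := ha
  have ha1 : a < 1 := by linarith
  have hexp : (1:ℝ) < Real.exp 1 := by nlinarith [Real.add_one_le_exp (1:ℝ)]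
  have hL : 0 < Real.logb 2 (Real.exp 1) := Real.logb_pos (by norm_num) hexp
  set L := Real.logb 2 (Real.exp 1) with hLdef
  refine ⟨56*L, by positivity, 1/4, by norm_num, ?_⟩
  intro e he he0 _
  have he2 : e ≤ 1/4 := le_of_lt he0
  have hq : 0 < (1/2 - e) := by linarith
  have hq1 : (1/2 - e) < 1 := by linarith
  set R : ℝ := 2*L*(1-2*a)^4*e^2 + 56*L*e^4 with hR
  have hR0 : 0 ≤ R := by positivity
  -- the per-step deficit is at most R
  have hdef : L * ((1-2*a)^2*(2*e)^2/2 * ((1-2*a)^2+(2*e)^2) + 3*(2*e)^4) ≤ R := by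
    rw [hR]
    have key : 2*L*(1-2*a)^4*e^2 + 56*L*e^4
        - L*((1-2*a)^2*(2*e)^2/2*((1-2*a)^2+(2*e)^2) + 3*(2*e)^4)
        = 8*L*e^4*(1-(1-2*a)^2) := by ring
    have hb2 : 0 ≤ 1-(1-2*a)^2 := by nlinarith
    have hnn : 0 ≤ 8*L*e^4*(1-(1-2*a)^2) :=
      mul_nonneg (by positivity) hb2
    linarith [key, hnn]
  set H : ℕ → ℝ := fun n => entropyDist (bscOutput a (symPathProb (1/2 - e) n)) with hH
  have hstep : ∀ n : ℕ, H (n+1) + 1 - R ≤ H (n+2) := by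
    intro n
    have := step_ent ha0 ha2 he he2 n
    have h2 : H (n+1) + 1 - R ≤ H (n+1) + 1
        - L * ((1-2*a)^2*(2*e)^2/2 * ((1-2*a)^2+(2*e)^2) + 3*(2*e)^4) := by
      simp only [hH]
      linarith [hdef]
    exact le_trans h2 this
  have hone : H 1 = 1 := H_one ha0 ha1
  have hN : ∀ n : ℕ, ((n:ℝ)+1) * (1 - R) ≤ H (n+1) := by
    intro n
    induction n with
    | zero => simp [hone]; linarith
    | succ m IH =>
      have h1 := hstep m
      have : ((m:ℝ)+1+1) * (1-R) = ((m:ℝ)+1)*(1-R) + (1-R) := by ring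
      push_cast
      push_cast at IH
      linarith [IH, h1]
  have hup : ∀ᶠ n in atTop, H n / (n:ℝ) ≤ 1 := by
    rw [eventually_atTop]
    refine ⟨1, fun n hn => ?_⟩
    obtain ⟨m, rfl⟩ : ∃ m, n = m + 1 := ⟨n - 1, by omega⟩
    have hpos : (0:ℝ) < (m:ℝ)+1 := by positivity
    have hub : H (m+1) ≤ ((m:ℝ)+1) := by
      have hppos : ∀ y, 0 < bscOutput a (symPathProb (1/2-e) (m+1)) y := by
        intro y
        rw [bsc_eq]
        exact pG_pos _ _ ha0 ha1 hq hq1 m y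
      have hsum1 : ∑ y, bscOutput a (symPathProb (1/2-e) (m+1)) y = 1 := by
        rw [Finset.sum_congr rfl fun y _ => bsc_eq (1/2-e) a m y]
        exact sum_pG _ _ m
      have h9 := ent_le_card (m+1) _ hppos hsum1
      push_cast at h9
      exact h9
    rw [div_le_one (by push_cast; linarith)]
    push_cast
    linarith
  have hlow : ∀ᶠ n in atTop, 1 - R ≤ H n / (n:ℝ) := by
    rw [eventually_atTop]
    refine ⟨1, fun n hn => ?_⟩
    obtain ⟨m, rfl⟩ : ∃ m, n = m + 1 := ⟨n - 1, by omega⟩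
    have hpos : (0:ℝ) < (m:ℝ)+1 := by positivity
    rw [le_div_iff₀ (by push_cast; linarith)]
    have := hN m
    push_cast
    linarith
  have hcb : Filter.IsCoboundedUnder (· ≥ ·) Filter.atTop (fun n : ℕ => H n / (n:ℝ)) :=
    Filter.isCoboundedUnder_ge_of_eventually_le Filter.atTop hup
  have hlim := Filter.le_liminf_of_le hcb hlow
  have : 1 - Filter.atTop.liminf (fun n : ℕ => H n / (n:ℝ)) ≤ R := by linarith
  calc 1 - Filter.atTop.liminf (fun n : ℕ =>
        entropyDist (bscOutput a (symPathProb (1/2 - e) n)) / n)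
      ≤ R := this
    _ = 2 * L * (1 - 2*a)^4 * e^2 + (56*L) * e^4 := by rw [hR]

end main
end

section
/- Fix q ∈ [0,1) and for ε ∈ (0,1/2) let H̄(Y_ε) denote the entropy rate of the process obtained by passing the stationary binary Markov process with transition probabilities q₀₁ = q and q₁₀ = 1 through a binary symmetric channel with crossover probability α = 1/2 - ε. Then H̄(Y_ε) = 1 - 2·log₂e·((1-q)/(1+q))²·ε² + O(ε⁴) as ε → 0; that is, there exist C > 0 and ε₀ > 0 such that for all 0 < ε < ε₀, |H̄(Y_ε) - 1 + 2·log₂e·((1-q)/(1+q))²·ε²| ≤ C·ε⁴. -/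
/-!
Let `m = π₀ - π₁` be the stationary mean of `(-1)^X` and `βₙ(y) = E[(-1)^Xₙ₊₁ | Y₁ … Yₙ = y]`
the predictive bias. By the chain rule, `H(Y₁ … Yₙ₊₁) - H(Y₁ … Yₙ) = E h(1/2 - ε βₙ)`, and
`h(1/2 - t) = 1 - (2 / ln 2) t² + O(t⁴)`, so each increment is
`1 - (2 / ln 2) ε² E βₙ² + O(ε⁴)`. Stationarity gives `E βₙ = m`. The forward filter contracts:
observing one output moves the bias by at most `4ε`, and one Markov step multiplies its distance
to `m` by `λ = 1 - q₀₁ - q₁₀` (`λ = -q` here). Hence `|βₙ - m| ≤ 4ε|λ| / (1 - |λ|)`,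
`E βₙ² = m² + O(ε²)`, and every increment, so also `H(Y₁ … Yₙ)/n`, lies within `O(ε⁴)` of
`1 - (2 / ln 2) m² ε²`.
-/

open Real Filter MeasureTheory

lemma hasSum_mul_log_one_add_add_mul_log_one_sub {u : ℝ} (hu : |u| < 1) :
    HasSum (fun k : ℕ => (u ^ 2) ^ (k + 1) / ((2 * k + 1) * (k + 1)))
      ((1 + u) * log (1 + u) + (1 - u) * log (1 - u)) := by
  have hsq : |u ^ 2| < 1 := by rw [abs_pow, sq_lt_one_iff_abs_lt_one]; simpa using hu
  have hpos : 0 < 1 - u := by linarith [le_abs_self u]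
  have hpos' : 0 < 1 + u := by linarith [neg_abs_le u]
  have hlog : log (1 - u ^ 2) = log (1 + u) + log (1 - u) := by
    rw [← log_mul hpos'.ne' hpos.ne']; ring_nf
  have hval : (1 + u) * log (1 + u) + (1 - u) * log (1 - u)
      = u * (log (1 + u) - log (1 - u)) - -log (1 - u ^ 2) := by
    rw [hlog]; ring
  have hterm : (fun k : ℕ => (u ^ 2) ^ (k + 1) / ((2 * k + 1) * (k + 1)))
      = fun k : ℕ =>
          u * (2 * (1 / (2 * k + 1)) * u ^ (2 * k + 1)) - (u ^ 2) ^ (k + 1) / (k + 1) := by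
    ext k
    field_simp
    ring
  rw [hterm, hval]
  exact ((hasSum_log_sub_log_of_abs_lt_one hu).mul_left u).sub
    (hasSum_pow_div_log_of_abs_lt_one hsq)

lemma sq_le_mul_log_one_add_add_mul_log_one_sub {u : ℝ} (hu : |u| < 1) :
    u ^ 2 ≤ (1 + u) * log (1 + u) + (1 - u) * log (1 - u) := by
  simpa using le_hasSum (hasSum_mul_log_one_add_add_mul_log_one_sub hu) 0
    (fun k _ => by positivity)

lemma mul_log_one_add_add_mul_log_one_sub_le {u : ℝ} (hu : |u| < 1) :
    (1 + u) * log (1 + u) + (1 - u) * log (1 - u) ≤ u ^ 2 / (1 - u ^ 2) := by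
  have hsq : u ^ 2 < 1 := by rw [sq_lt_one_iff_abs_lt_one]; exact hu
  refine hasSum_le (fun k => ?_) (hasSum_mul_log_one_add_add_mul_log_one_sub hu)
    ((hasSum_geometric_of_lt_one (sq_nonneg u) hsq).mul_left (u ^ 2))
  calc (u ^ 2) ^ (k + 1) / ((2 * k + 1) * (k + 1)) ≤ (u ^ 2) ^ (k + 1) :=
        div_le_self (by positivity) (by nlinarith [k.cast_nonneg (α := ℝ)])
    _ = u ^ 2 * (u ^ 2) ^ k := by ring

lemma binEnt_half_sub (t : ℝ) :
    binEnt (1 / 2 - t) =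
      1 - ((1 + 2 * t) * log (1 + 2 * t) + (1 - 2 * t) * log (1 - 2 * t)) / (2 * log 2) := by
  have hhalf (u : ℝ) : u / 2 * log (u / 2) = (u * log u - u * log 2) / 2 := by
    rcases eq_or_ne u 0 with rfl | hu
    · simp
    · rw [log_div hu two_ne_zero]; ring
  have e1 : (1 : ℝ) / 2 - t = (1 - 2 * t) / 2 := by ring
  have e2 : (1 : ℝ) - (1 - 2 * t) / 2 = (1 + 2 * t) / 2 := by ring
  have h2 : log 2 ≠ 0 := (log_pos one_lt_two).ne'
  rw [binEnt, e1, e2, logb, logb, neg_mul, ← mul_div_assoc, ← mul_div_assoc, hhalf, hhalf]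
  field_simp
  ring

lemma binEnt_half_sub_le {t : ℝ} (ht : |t| < 1 / 2) :
    binEnt (1 / 2 - t) ≤ 1 - 2 / log 2 * t ^ 2 := by
  have hu : |2 * t| < 1 := by rw [abs_mul, abs_two]; linarith
  have hφ := sq_le_mul_log_one_add_add_mul_log_one_sub hu
  have h2 := log_pos one_lt_two
  rw [binEnt_half_sub, sub_le_sub_iff_left, le_div_iff₀ (by positivity)]
  field_simp
  linarith

lemma one_sub_le_binEnt_half_sub {t : ℝ} (ht : |t| ≤ 1 / 4) :
    1 - 2 / log 2 * (t ^ 2 + 8 * t ^ 4) ≤ binEnt (1 / 2 - t) := by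
  have ht2 : 4 * t ^ 2 ≤ 1 / 4 := by nlinarith [sq_abs t, abs_nonneg t]
  have hu : |2 * t| < 1 := by rw [abs_mul, abs_two]; linarith
  have hφ := mul_log_one_add_add_mul_log_one_sub_le hu
  have hgeom : (2 * t) ^ 2 / (1 - (2 * t) ^ 2) ≤ 4 * t ^ 2 + 32 * t ^ 4 := by
    rw [div_le_iff₀ (by nlinarith)]
    nlinarith [pow_nonneg (sq_nonneg t) 2]
  have h2 := log_pos one_lt_two
  rw [binEnt_half_sub, sub_le_sub_iff_left, div_le_iff₀ (by positivity)]
  field_simp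
  linarith

section WeightedAverage

variable {ι : Type*} [Fintype ι] {w f : ι → ℝ} {m D : ℝ}

lemma sum_mul_sq_mem_Icc (hw : ∀ i, 0 ≤ w i) (hw1 : ∑ i, w i = 1)
    (hm : ∑ i, w i * f i = m) (hD : ∀ i, |f i - m| ≤ D) :
    ∑ i, w i * f i ^ 2 ∈ Set.Icc (m ^ 2) (m ^ 2 + D ^ 2) := by
  have hvar : ∑ i, w i * (f i - m) ^ 2 = ∑ i, w i * f i ^ 2 - m ^ 2 := by
    have hexp : ∀ i, w i * (f i - m) ^ 2 = w i * f i ^ 2 - 2 * m * (w i * f i) + m ^ 2 * w i :=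
      fun i => by ring
    simp only [hexp, Finset.sum_add_distrib, Finset.sum_sub_distrib, ← Finset.mul_sum, hm, hw1]
    ring
  have hle : ∑ i, w i * (f i - m) ^ 2 ≤ ∑ i, w i * D ^ 2 :=
    Finset.sum_le_sum fun i _ => mul_le_mul_of_nonneg_left
      (sq_le_sq' (abs_le.1 (hD i)).1 (abs_le.1 (hD i)).2) (hw i)
  rw [← Finset.sum_mul, hw1, one_mul] at hle
  have hnonneg : 0 ≤ ∑ i, w i * (f i - m) ^ 2 :=
    Finset.sum_nonneg fun i _ => mul_nonneg (hw i) (sq_nonneg _)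
  constructor <;> linarith

lemma sum_mul_binEnt_half_sub_mem_Icc {e : ℝ} (hw : ∀ i, 0 ≤ w i) (hw1 : ∑ i, w i = 1)
    (hm : ∑ i, w i * f i = m) (hf : ∀ i, |f i| ≤ 1) (hD : ∀ i, |f i - m| ≤ D)
    (he0 : 0 ≤ e) (he : e ≤ 1 / 4) :
    ∑ i, w i * binEnt (1 / 2 - e * f i) ∈
      Set.Icc (1 - 2 / log 2 * (e ^ 2 * (m ^ 2 + D ^ 2) + 8 * e ^ 4))
        (1 - 2 / log 2 * (e ^ 2 * m ^ 2)) := by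
  have hef (i : ι) : |e * f i| ≤ e := by
    rw [abs_mul, abs_of_nonneg he0]; exact mul_le_of_le_one_right he0 (hf i)
  have hf4 : ∑ i, w i * f i ^ 4 ≤ 1 := by
    calc ∑ i, w i * f i ^ 4 ≤ ∑ i, w i :=
          Finset.sum_le_sum fun i _ => mul_le_of_le_one_right (hw i)
            (by rw [← Even.pow_abs (by decide)]; exact pow_le_one₀ (abs_nonneg _) (hf i))
      _ = 1 := hw1
  have hup : ∑ i, w i * binEnt (1 / 2 - e * f i)
      ≤ ∑ i, (w i - 2 / log 2 * e ^ 2 * (w i * f i ^ 2)) := by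
    refine Finset.sum_le_sum fun i _ => ?_
    calc w i * binEnt (1 / 2 - e * f i) ≤ w i * (1 - 2 / log 2 * (e * f i) ^ 2) :=
          mul_le_mul_of_nonneg_left (binEnt_half_sub_le ((hef i).trans_lt (by linarith))) (hw i)
      _ = _ := by ring
  have hlow : ∑ i, (w i - 2 / log 2 * e ^ 2 * (w i * f i ^ 2)
        - 2 / log 2 * 8 * e ^ 4 * (w i * f i ^ 4)) ≤ ∑ i, w i * binEnt (1 / 2 - e * f i) := by
    refine Finset.sum_le_sum fun i _ => ?_
    calc _ = w i * (1 - 2 / log 2 * ((e * f i) ^ 2 + 8 * (e * f i) ^ 4)) := by ring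
      _ ≤ w i * binEnt (1 / 2 - e * f i) :=
          mul_le_mul_of_nonneg_left (one_sub_le_binEnt_half_sub ((hef i).trans he)) (hw i)
  simp only [Finset.sum_sub_distrib, ← Finset.mul_sum, hw1] at hup hlow
  obtain ⟨hsq_ge, hsq_le⟩ := sum_mul_sq_mem_Icc hw hw1 hm hD
  have hKe : 0 ≤ 2 / log 2 * e ^ 2 := by positivity
  have hKe4 : 0 ≤ 2 / log 2 * 8 * e ^ 4 := by positivity
  constructor
  · linarith [mul_le_mul_of_nonneg_left hsq_le hKe, mul_le_mul_of_nonneg_left hf4 hKe4]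
  · linarith [mul_le_mul_of_nonneg_left hsq_ge hKe]

end WeightedAverage

lemma sum_fin_snoc {α M : Type*} [Fintype α] [AddCommMonoid M] {n : ℕ}
    (f : (Fin (n + 1) → α) → M) :
    ∑ x, f x = ∑ y : Fin n → α, ∑ b, f (Fin.snoc y b) := by
  rw [← (Fin.snocEquiv fun _ => α).sum_comp, Fintype.sum_prod_type, Finset.sum_comm]
  rfl

lemma entropyDist_of_snoc {n : ℕ} {P : (Fin (n + 1) → Bool) → ℝ} {p c : (Fin n → Bool) → ℝ}
    (htrue : ∀ y, P (Fin.snoc y true) = p y * c y)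
    (hfalse : ∀ y, P (Fin.snoc y false) = p y * (1 - c y)) :
    entropyDist P = entropyDist p + ∑ y, p y * binEnt (c y) := by
  have hgroup (s c : ℝ) : -(s * c * logb 2 (s * c)) + -(s * (1 - c) * logb 2 (s * (1 - c)))
      = -(s * logb 2 s) + s * binEnt c := by
    have hlogb (x : ℝ) : x * logb 2 x = -negMulLog x / log 2 := by
      rw [negMulLog, logb]; ring
    have h2 : log 2 ≠ 0 := (log_pos one_lt_two).ne'
    simp only [binEnt, neg_mul, hlogb]
    rw [negMulLog_mul, negMulLog_mul]
    field_simp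
    ring
  rw [entropyDist, entropyDist, sum_fin_snoc, ← Finset.sum_add_distrib]
  refine Finset.sum_congr rfl fun y _ => ?_
  rw [Fintype.sum_bool, htrue, hfalse, hgroup]

lemma markovPathProb_snoc (p0 p1 q01 q10 : ℝ) (n : ℕ) (x : Fin (n + 1) → Bool) (b : Bool) :
    markovPathProb p0 p1 q01 q10 (n + 2) (Fin.snoc x b)
      = markovPathProb p0 p1 q01 q10 (n + 1) x * markovTrans q01 q10 (x (Fin.last n)) b := by
  unfold markovPathProb
  rw [Fin.prod_univ_castSucc]
  congr 1
  · refine Finset.prod_congr rfl fun i _ => ?_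
    by_cases h0 : (i : ℕ) = 0
    · simp only [Fin.val_castSucc, h0, if_true, Fin.snoc_castSucc]
    · have hprev : (⟨(i : ℕ) - 1, by omega⟩ : Fin (n + 2))
          = Fin.castSucc ⟨(i : ℕ) - 1, by omega⟩ := rfl
      simp only [Fin.val_castSucc, h0, if_false, Fin.snoc_castSucc, hprev]
  · have hprev : (⟨n + 1 - 1, by omega⟩ : Fin (n + 2)) = Fin.castSucc (Fin.last n) := by
      ext; simp
    simp only [Fin.val_last, Nat.add_one_ne_zero, if_false, hprev, Fin.snoc_castSucc,
      Fin.snoc_last]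

lemma sum_markovTrans (q01 q10 : ℝ) (x : Bool) : ∑ x', markovTrans q01 q10 x x' = 1 := by
  cases x <;> simp [markovTrans]

lemma sum_markovPathProb_snoc {p0 p1 : ℝ} (q01 q10 : ℝ) (hp : p0 + p1 = 1) (n : ℕ)
    (x : Fin n → Bool) :
    ∑ b, markovPathProb p0 p1 q01 q10 (n + 1) (Fin.snoc x b)
      = markovPathProb p0 p1 q01 q10 n x := by
  cases n with
  | zero => simp [markovPathProb, Fin.snoc_zero, add_comm p1, hp]
  | succ n => simp only [markovPathProb_snoc, ← Finset.mul_sum, sum_markovTrans, mul_one]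

def bscLik (a : ℝ) (y x : Bool) : ℝ := if y = x then 1 - a else a

lemma sum_bscLik (a : ℝ) (x : Bool) : ∑ y, bscLik a y x = 1 := by
  cases x <;> simp [bscLik]

/-- `predJoint p0 p1 q01 q10 a n y x` is `P(Y₁ … Yₙ = y, Xₙ₊₁ = x)`. -/
noncomputable def predJoint (p0 p1 q01 q10 a : ℝ) : (n : ℕ) → (Fin n → Bool) → Bool → ℝ
  | 0, _, x => if x then p1 else p0
  | n + 1, y, x' => ∑ x, predJoint p0 p1 q01 q10 a n (Fin.init y) x *
      bscLik a (y (Fin.last n)) x * markovTrans q01 q10 x x'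

noncomputable def obsProb (p0 p1 q01 q10 a : ℝ) (n : ℕ) (y : Fin n → Bool) : ℝ :=
  ∑ x, predJoint p0 p1 q01 q10 a n y x

/-- `predBias … n y` is `E[(-1)^Xₙ₊₁ | Y₁ … Yₙ = y]`. -/
noncomputable def predBias (p0 p1 q01 q10 a : ℝ) (n : ℕ) (y : Fin n → Bool) : ℝ :=
  (predJoint p0 p1 q01 q10 a n y false - predJoint p0 p1 q01 q10 a n y true) /
    obsProb p0 p1 q01 q10 a n y

structure IsBinaryMarkovChain (p0 p1 q01 q10 : ℝ) : Prop where
  p0_nonneg : 0 ≤ p0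
  p1_nonneg : 0 ≤ p1
  p0_add_p1 : p0 + p1 = 1
  q01_mem : q01 ∈ Set.Icc (0 : ℝ) 1
  q10_mem : q10 ∈ Set.Icc (0 : ℝ) 1

section HiddenMarkov

variable {p0 p1 q01 q10 a : ℝ}

lemma predJoint_snoc (n : ℕ) (y : Fin n → Bool) (b x' : Bool) :
    predJoint p0 p1 q01 q10 a (n + 1) (Fin.snoc y b) x'
      = ∑ x, predJoint p0 p1 q01 q10 a n y x * bscLik a b x * markovTrans q01 q10 x x' := by
  simp [predJoint]

lemma predJoint_eq_sum (n : ℕ) (y : Fin n → Bool) (x' : Bool) :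
    predJoint p0 p1 q01 q10 a n y x'
      = ∑ x : Fin n → Bool, markovPathProb p0 p1 q01 q10 (n + 1) (Fin.snoc x x') *
          ∏ i, bscLik a (y i) (x i) := by
  induction n generalizing x' with
  | zero => cases x' <;> simp [predJoint, markovPathProb, Fin.snoc_zero]
  | succ n ih =>
    induction y using Fin.snocCases with
    | snoc y b =>
      simp only [predJoint_snoc, ih, Finset.sum_mul]
      rw [sum_fin_snoc, Finset.sum_comm]
      refine Finset.sum_congr rfl fun z _ => Finset.sum_congr rfl fun x _ => ?_
      rw [markovPathProb_snoc, Fin.prod_univ_castSucc]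
      simp only [Fin.snoc_castSucc, Fin.snoc_last]
      ring

lemma bscOutput_markovPathProb (hp : p0 + p1 = 1) (n : ℕ) :
    bscOutput a (markovPathProb p0 p1 q01 q10 n) = obsProb p0 p1 q01 q10 a n := by
  ext y
  simp only [obsProb, predJoint_eq_sum]
  rw [Finset.sum_comm]
  refine Finset.sum_congr rfl fun x _ => ?_
  rw [← Finset.sum_mul, sum_markovPathProb_snoc q01 q10 hp]
  rfl

lemma obsProb_snoc (n : ℕ) (y : Fin n → Bool) (b : Bool) :
    obsProb p0 p1 q01 q10 a (n + 1) (Fin.snoc y b)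
      = ∑ x, predJoint p0 p1 q01 q10 a n y x * bscLik a b x := by
  simp only [obsProb, predJoint_snoc]
  rw [Finset.sum_comm]
  simp only [← Finset.mul_sum, sum_markovTrans, mul_one]

lemma sum_predJoint (hbal : p0 * q01 = p1 * q10) (n : ℕ) (x : Bool) :
    ∑ y, predJoint p0 p1 q01 q10 a n y x = if x then p1 else p0 := by
  induction n generalizing x with
  | zero => simp [predJoint]
  | succ n ih =>
    have hstep (y : Fin n → Bool) :
        ∑ b, predJoint p0 p1 q01 q10 a (n + 1) (Fin.snoc y b) x
          = ∑ x₀, predJoint p0 p1 q01 q10 a n y x₀ * markovTrans q01 q10 x₀ x := by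
      simp only [predJoint_snoc]
      rw [Finset.sum_comm]
      refine Finset.sum_congr rfl fun x₀ _ => ?_
      rw [← Finset.sum_mul, ← Finset.mul_sum, sum_bscLik, mul_one]
    rw [sum_fin_snoc]
    simp only [hstep]
    rw [Finset.sum_comm]
    simp only [← Finset.sum_mul, ih]
    cases x <;> simp [markovTrans] <;> linarith

lemma predJoint_nonneg (hc : IsBinaryMarkovChain p0 p1 q01 q10) (ha : a ∈ Set.Icc (0 : ℝ) 1)
    (n : ℕ) (y : Fin n → Bool) (x : Bool) : 0 ≤ predJoint p0 p1 q01 q10 a n y x := by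
  induction n generalizing x with
  | zero => cases x <;> simp [predJoint, hc.p0_nonneg, hc.p1_nonneg]
  | succ n ih =>
    induction y using Fin.snocCases with
    | snoc y b =>
      have hq01 := hc.q01_mem
      have hq10 := hc.q10_mem
      rw [predJoint_snoc]
      refine Finset.sum_nonneg fun x₀ _ => mul_nonneg (mul_nonneg (ih y x₀) ?_) ?_
      · unfold bscLik; split_ifs <;> linarith [ha.1, ha.2]
      · unfold markovTrans; split_ifs <;> linarith [hq01.1, hq01.2, hq10.1, hq10.2]

lemma obsProb_pos (hc : IsBinaryMarkovChain p0 p1 q01 q10) (ha : a ∈ Set.Ioo (0 : ℝ) 1)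
    (n : ℕ) (y : Fin n → Bool) : 0 < obsProb p0 p1 q01 q10 a n y := by
  induction n with
  | zero => simp [obsProb, predJoint, add_comm p1, hc.p0_add_p1]
  | succ n ih =>
    induction y using Fin.snocCases with
    | snoc y b =>
      have hlik (x : Bool) : min a (1 - a) ≤ bscLik a b x := by
        unfold bscLik; split_ifs <;> simp
      have hmin : 0 < min a (1 - a) := lt_min ha.1 (by linarith [ha.2])
      calc 0 < min a (1 - a) * obsProb p0 p1 q01 q10 a n y := mul_pos hmin (ih y)
        _ = ∑ x, predJoint p0 p1 q01 q10 a n y x * min a (1 - a) := by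
          rw [obsProb, Finset.mul_sum]; simp only [mul_comm]
        _ ≤ _ := by
          rw [obsProb_snoc]
          exact Finset.sum_le_sum fun x _ => mul_le_mul_of_nonneg_left (hlik x)
            (predJoint_nonneg hc (Set.Ioo_subset_Icc_self ha) n y x)

lemma abs_predBias_le_one (hc : IsBinaryMarkovChain p0 p1 q01 q10) (ha : a ∈ Set.Ioo (0 : ℝ) 1)
    (n : ℕ) (y : Fin n → Bool) :
    |predBias p0 p1 q01 q10 a n y| ≤ 1 := by
  have hP := obsProb_pos hc ha n y
  have hT := predJoint_nonneg hc (Set.Ioo_subset_Icc_self ha) n y true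
  have hF := predJoint_nonneg hc (Set.Ioo_subset_Icc_self ha) n y false
  rw [obsProb, Fintype.sum_bool] at hP
  rw [predBias, obsProb, Fintype.sum_bool, abs_div, abs_of_pos hP, div_le_one hP, abs_le]
  constructor <;> linarith

lemma sum_obsProb (hp : p0 + p1 = 1) (hbal : p0 * q01 = p1 * q10) (n : ℕ) :
    ∑ y, obsProb p0 p1 q01 q10 a n y = 1 := by
  simp only [obsProb]
  rw [Finset.sum_comm]
  simp [sum_predJoint hbal, add_comm p1, hp]

lemma sum_obsProb_mul_predBias (hc : IsBinaryMarkovChain p0 p1 q01 q10)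
    (hbal : p0 * q01 = p1 * q10) (ha : a ∈ Set.Ioo (0 : ℝ) 1) (n : ℕ) :
    ∑ y, obsProb p0 p1 q01 q10 a n y * predBias p0 p1 q01 q10 a n y = p0 - p1 := by
  simp only [predBias, mul_div_cancel₀ _ (obsProb_pos hc ha n _).ne']
  rw [Finset.sum_sub_distrib, sum_predJoint hbal, sum_predJoint hbal]
  simp

lemma predBias_zero (hp : p0 + p1 = 1) (y : Fin 0 → Bool) :
    predBias p0 p1 q01 q10 a 0 y = p0 - p1 := by
  simp [predBias, obsProb, predJoint, add_comm p1, hp]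

lemma entropyDist_obsProb_zero (hp : p0 + p1 = 1) :
    entropyDist (obsProb p0 p1 q01 q10 a 0) = 0 := by
  simp [entropyDist, obsProb, predJoint, add_comm p1, hp]

end HiddenMarkov

/-- In `tanh` coordinates Bayes' rule is addition: `bayesBias (tanh v) (tanh u) = tanh (u + v)`. -/
noncomputable def bayesBias (s β : ℝ) : ℝ := (β + s) / (1 + s * β)

lemma abs_bayesBias_sub_le {β s : ℝ} (hβ : |β| ≤ 1) (hs : |s| ≤ 1 / 2) :
    |bayesBias s β - β| ≤ 2 * |s| := by
  have hsβ : |s * β| ≤ 1 / 2 := by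
    rw [abs_mul]; nlinarith [abs_nonneg s, abs_nonneg β]
  have hden : 1 / 2 ≤ 1 + s * β := by linarith [neg_abs_le (s * β)]
  have hβ2 : |1 - β ^ 2| ≤ 1 := by
    rw [abs_le]; constructor <;> nlinarith [sq_abs β, abs_nonneg β]
  have hpos : 0 < 1 + s * β := by linarith
  have hdiff : bayesBias s β - β = s * (1 - β ^ 2) / (1 + s * β) := by
    rw [bayesBias, eq_div_iff hpos.ne', sub_mul, div_mul_cancel₀ _ hpos.ne']; ring
  rw [hdiff, abs_div, abs_of_pos hpos, div_le_iff₀ hpos, abs_mul]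
  nlinarith [abs_nonneg s, mul_le_mul_of_nonneg_left hβ2 (abs_nonneg s)]

lemma bayesBias_div {T F s : ℝ} (hP : T + F ≠ 0) (hQ : (1 + s) * F + (1 - s) * T ≠ 0) :
    bayesBias s ((F - T) / (T + F))
      = ((1 + s) * F - (1 - s) * T) / ((1 + s) * F + (1 - s) * T) := by
  have hQ' : T + F + s * (F - T) ≠ 0 := by contrapose! hQ; linear_combination hQ
  rw [bayesBias, div_add' _ _ _ hP, mul_div_assoc', one_add_div hP, div_div_div_cancel_right₀ hP,
    div_eq_div_iff hQ' hQ]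
  ring

section VeryNoisy

variable {p0 p1 q01 q10 e : ℝ}

lemma obsProb_snoc_true (n : ℕ) (y : Fin n → Bool)
    (hP : obsProb p0 p1 q01 q10 (1 / 2 - e) n y ≠ 0) :
    obsProb p0 p1 q01 q10 (1 / 2 - e) (n + 1) (Fin.snoc y true)
      = obsProb p0 p1 q01 q10 (1 / 2 - e) n y *
          (1 / 2 - e * predBias p0 p1 q01 q10 (1 / 2 - e) n y) := by
  have key := mul_div_cancel₀ (predJoint p0 p1 q01 q10 (1 / 2 - e) n y false -
    predJoint p0 p1 q01 q10 (1 / 2 - e) n y true) hP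
  rw [obsProb_snoc, predBias]
  simp only [obsProb, Fintype.sum_bool, bscLik] at key ⊢
  norm_num
  linear_combination e * key

lemma obsProb_snoc_false (n : ℕ) (y : Fin n → Bool)
    (hP : obsProb p0 p1 q01 q10 (1 / 2 - e) n y ≠ 0) :
    obsProb p0 p1 q01 q10 (1 / 2 - e) (n + 1) (Fin.snoc y false)
      = obsProb p0 p1 q01 q10 (1 / 2 - e) n y *
          (1 - (1 / 2 - e * predBias p0 p1 q01 q10 (1 / 2 - e) n y)) := by
  have key := mul_div_cancel₀ (predJoint p0 p1 q01 q10 (1 / 2 - e) n y false -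
    predJoint p0 p1 q01 q10 (1 / 2 - e) n y true) hP
  rw [obsProb_snoc, predBias]
  simp only [obsProb, Fintype.sum_bool, bscLik] at key ⊢
  norm_num
  linear_combination -e * key

lemma predBias_snoc (n : ℕ) (y : Fin n → Bool) (b : Bool)
    (hP : obsProb p0 p1 q01 q10 (1 / 2 - e) n y ≠ 0)
    (hP' : obsProb p0 p1 q01 q10 (1 / 2 - e) (n + 1) (Fin.snoc y b) ≠ 0) :
    predBias p0 p1 q01 q10 (1 / 2 - e) (n + 1) (Fin.snoc y b)
      = q10 - q01 + (1 - q01 - q10) *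
          bayesBias (if b then -(2 * e) else 2 * e) (predBias p0 p1 q01 q10 (1 / 2 - e) n y) := by
  set s := if b then -(2 * e) else 2 * e
  have hlikF : bscLik (1 / 2 - e) b false = (1 + s) / 2 := by
    cases b <;> simp [s, bscLik] <;> ring
  have hlikT : bscLik (1 / 2 - e) b true = (1 - s) / 2 := by
    cases b <;> simp [s, bscLik] <;> ring
  rw [obsProb_snoc] at hP'
  rw [predBias, obsProb_snoc]
  simp only [predBias, obsProb, predJoint_snoc, Fintype.sum_bool, hlikF, hlikT, markovTrans,
    if_true, Bool.false_eq_true, if_false] at hP hP' ⊢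
  generalize predJoint p0 p1 q01 q10 (1 / 2 - e) n y true = T at hP hP' ⊢
  generalize predJoint p0 p1 q01 q10 (1 / 2 - e) n y false = F at hP hP' ⊢
  have hQ : (1 + s) * F + (1 - s) * T ≠ 0 := by contrapose! hP'; linear_combination hP' / 2
  have hcancel := div_mul_cancel₀ ((1 + s) * F - (1 - s) * T) hQ
  rw [bayesBias_div hP hQ, div_eq_iff hP']
  linear_combination (-(1 - q01 - q10) / 2) * hcancel

lemma abs_predBias_sub_le (hc : IsBinaryMarkovChain p0 p1 q01 q10)
    (hbal : p0 * q01 = p1 * q10) (hρ : |1 - q01 - q10| < 1) (he0 : 0 ≤ e) (he : e ≤ 1 / 4)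
    (n : ℕ) (y : Fin n → Bool) :
    |predBias p0 p1 q01 q10 (1 / 2 - e) n y - (p0 - p1)|
      ≤ 4 * e * |1 - q01 - q10| / (1 - |1 - q01 - q10|) := by
  have ha : 1 / 2 - e ∈ Set.Ioo (0 : ℝ) 1 := ⟨by linarith, by linarith⟩
  have hfix : q10 - q01 + (1 - q01 - q10) * (p0 - p1) = p0 - p1 := by
    linear_combination (-2) * hbal - (q10 - q01) * hc.p0_add_p1
  have hρ' : 0 < 1 - |1 - q01 - q10| := by linarith
  induction n with
  | zero => rw [predBias_zero hc.p0_add_p1, sub_self, abs_zero]; positivity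
  | succ n ih =>
    induction y using Fin.snocCases with
    | snoc y b =>
      rw [predBias_snoc n y b (obsProb_pos hc ha n y).ne' (obsProb_pos hc ha _ _).ne']
      set β := predBias p0 p1 q01 q10 (1 / 2 - e) n y
      set s := if b then -(2 * e) else 2 * e
      have hs : |s| = 2 * e := by cases b <;> simp [s, abs_of_nonneg he0]
      have hbayes : |bayesBias s β - β| ≤ 4 * e := by
        have := abs_bayesBias_sub_le (abs_predBias_le_one hc ha n y) (by linarith : |s| ≤ 1 / 2)
        linarith
      calc |q10 - q01 + (1 - q01 - q10) * bayesBias s β - (p0 - p1)|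
          = |1 - q01 - q10| * |bayesBias s β - β + (β - (p0 - p1))| := by
            rw [← abs_mul]; congr 1; linear_combination hfix
        _ ≤ |1 - q01 - q10| * (4 * e + 4 * e * |1 - q01 - q10| / (1 - |1 - q01 - q10|)) := by
            gcongr
            exact (abs_add_le _ _).trans (add_le_add hbayes (ih y))
        _ = 4 * e * |1 - q01 - q10| / (1 - |1 - q01 - q10|) := by
            field_simp
            ring

lemma entropyDist_obsProb_succ_sub_mem_Icc (hc : IsBinaryMarkovChain p0 p1 q01 q10)
    (hbal : p0 * q01 = p1 * q10) (hρ : |1 - q01 - q10| < 1) (he0 : 0 ≤ e) (he : e ≤ 1 / 4)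
    (n : ℕ) :
    entropyDist (obsProb p0 p1 q01 q10 (1 / 2 - e) (n + 1))
        - entropyDist (obsProb p0 p1 q01 q10 (1 / 2 - e) n) ∈
      Set.Icc (1 - 2 / log 2 * (e ^ 2 * ((p0 - p1) ^ 2
          + (4 * e * |1 - q01 - q10| / (1 - |1 - q01 - q10|)) ^ 2) + 8 * e ^ 4))
        (1 - 2 / log 2 * (e ^ 2 * (p0 - p1) ^ 2)) := by
  have ha : 1 / 2 - e ∈ Set.Ioo (0 : ℝ) 1 := ⟨by linarith, by linarith⟩
  have hP (y : Fin n → Bool) := obsProb_pos hc ha n y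
  rw [entropyDist_of_snoc (fun y => obsProb_snoc_true n y (hP y).ne')
    (fun y => obsProb_snoc_false n y (hP y).ne'), add_sub_cancel_left]
  exact sum_mul_binEnt_half_sub_mem_Icc (fun y => (hP y).le) (sum_obsProb hc.p0_add_p1 hbal n)
    (sum_obsProb_mul_predBias hc hbal ha n) (abs_predBias_le_one hc ha n)
    (abs_predBias_sub_le hc hbal hρ he0 he n) he0 he

end VeryNoisy

lemma liminf_div_mem_Icc {a : ℕ → ℝ} {L U : ℝ} (h0 : a 0 = 0)
    (hstep : ∀ n, a (n + 1) - a n ∈ Set.Icc L U) :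
    atTop.liminf (fun n : ℕ => a n / n) ∈ Set.Icc L U := by
  have hbound (n : ℕ) : a n ∈ Set.Icc (n * L) (n * U) := by
    induction n with
    | zero => simp [h0]
    | succ n ih =>
      push_cast
      constructor <;> linarith [ih.1, ih.2, (hstep n).1, (hstep n).2]
  have hev : ∀ᶠ n : ℕ in atTop, a n / n ∈ Set.Icc L U := by
    filter_upwards [eventually_gt_atTop 0] with n hn
    have hn' : (0 : ℝ) < n := Nat.cast_pos.2 hn
    rw [Set.mem_Icc, le_div_iff₀ hn', div_le_iff₀ hn', mul_comm L, mul_comm U]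
    exact hbound n
  have hlow : IsBoundedUnder (· ≥ ·) atTop fun n : ℕ => a n / n :=
    ⟨L, eventually_map.2 (hev.mono fun _ h => h.1)⟩
  have hup : IsBoundedUnder (· ≤ ·) atTop fun n : ℕ => a n / n :=
    ⟨U, eventually_map.2 (hev.mono fun _ h => h.2)⟩
  exact ⟨le_liminf_of_le hup.isCoboundedUnder_ge (hev.mono fun _ h => h.1),
    liminf_le_of_frequently_le (hev.mono fun _ h => h.2).frequently hlow⟩

theorem liminf_entropy_bscOutput_markovPathProb_mem_Icc {p0 p1 q01 q10 e : ℝ}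
    (hc : IsBinaryMarkovChain p0 p1 q01 q10) (hbal : p0 * q01 = p1 * q10)
    (hρ : |1 - q01 - q10| < 1) (he0 : 0 ≤ e) (he : e ≤ 1 / 4) :
    atTop.liminf (fun n : ℕ =>
        entropyDist (bscOutput (1 / 2 - e) (markovPathProb p0 p1 q01 q10 n)) / n) ∈
      Set.Icc (1 - 2 / log 2 * (e ^ 2 * ((p0 - p1) ^ 2
          + (4 * e * |1 - q01 - q10| / (1 - |1 - q01 - q10|)) ^ 2) + 8 * e ^ 4))
        (1 - 2 / log 2 * (e ^ 2 * (p0 - p1) ^ 2)) := by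
  simp only [bscOutput_markovPathProb hc.p0_add_p1]
  exact liminf_div_mem_Icc (entropyDist_obsProb_zero hc.p0_add_p1)
    (entropyDist_obsProb_succ_sub_mem_Icc hc hbal hρ he0 he)

/-- Very noisy asymptotics for the `(1,∞)`-RLL hidden Markov process:
for fixed `q ∈ [0,1)` and `α = 1/2 - ε`,
`H̄(Y_ε) = 1 - 2·log₂e·((1-q)/(1+q))²·ε² + O(ε⁴)` (entropy rate taken as `liminf`). -/
theorem rll_very_noisy_asymptotics (q : ℝ) (hq : q ∈ Set.Ico (0:ℝ) 1) :
    ∃ C > (0:ℝ), ∃ e₀ > (0:ℝ), ∀ e : ℝ, 0 < e → e < e₀ → e < 1/2 →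
      |(Filter.atTop.liminf (fun n : ℕ =>
          entropyDist (bscOutput (1/2 - e) (markovPathProb (1/(1+q)) (q/(1+q)) q 1 n)) / n))
        - 1 + 2 * Real.logb 2 (Real.exp 1) * ((1-q)/(1+q))^2 * e^2| ≤ C * e^4 := by
  obtain ⟨hq0, hq1⟩ := hq
  have hc : IsBinaryMarkovChain (1 / (1 + q)) (q / (1 + q)) q 1 :=
    ⟨by positivity, by positivity, by field_simp, ⟨hq0, hq1.le⟩, ⟨zero_le_one, le_rfl⟩⟩
  have hbal : 1 / (1 + q) * q = q / (1 + q) * 1 := by ring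
  have hρ : |1 - q - 1| = q := by rw [sub_sub_cancel_left, abs_neg, abs_of_nonneg hq0]
  have hK : 2 * logb 2 (exp 1) = 2 / log 2 := by rw [logb, log_exp]; ring
  refine ⟨2 / log 2 * (16 * q ^ 2 / (1 - q) ^ 2 + 8), by positivity, 1 / 4, by norm_num,
    fun e he0 he _ => ?_⟩
  have h := liminf_entropy_bscOutput_markovPathProb_mem_Icc hc hbal (hρ.trans_lt hq1) he0.le he.le
  rw [hρ, show 1 / (1 + q) - q / (1 + q) = (1 - q) / (1 + q) by ring] at h
  rw [hK, abs_le]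
  constructor
  · have hL : 2 / log 2 * (e ^ 2 * (((1 - q) / (1 + q)) ^ 2 + (4 * e * q / (1 - q)) ^ 2)
          + 8 * e ^ 4) = 2 / log 2 * ((1 - q) / (1 + q)) ^ 2 * e ^ 2
          + 2 / log 2 * (16 * q ^ 2 / (1 - q) ^ 2 + 8) * e ^ 4 := by
      rw [div_pow (4 * e * q)]; ring
    linarith [h.1]
  · have hC : 0 ≤ 2 / log 2 * (16 * q ^ 2 / (1 - q) ^ 2 + 8) * e ^ 4 := by positivity
    linarith [h.2]
end

section
/- Let 0 < q < 1/2, 0 < λ < 1, and let G be a geometric random variable with parameter λ. Then E[h((1 - (1-2q)^G)/2)] = 1 - Σ_{k=1}^∞ (log₂e)/(2k(2k-1)) · λ(1-2q)^{2k}/(1 - (1-λ)(1-2q)^{2k}), where the series on the right converges. -/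
open Real Filter MeasureTheory

/-!
Writing `h((1-x)/2) = 1 - Σ_{k≥1} x^{2k}/(2k(2k-1) ln 2)` (the Taylor series of
`(1+x)ln(1+x) + (1-x)ln(1-x)`) and substituting `x = (1-2q)^G`, the expectation becomes a
nonnegative double series. Summing first over `G` produces the generating function
`E[t^G] = λt/(1-(1-λ)t)` at `t = (1-2q)^{2k}`, and Tonelli justifies the exchange.
-/

theorem hasSum_rows_of_hasSum_cols_of_nonneg {β γ : Type*} {f : β → γ → ℝ}
    (hf : ∀ b c, 0 ≤ f b c) {r : β → ℝ} {s : γ → ℝ} {S : ℝ}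
    (hr : ∀ b, HasSum (f b) (r b)) (hs : ∀ c, HasSum (fun b => f b c) (s c))
    (hS : HasSum s S) : HasSum r S := by
  have hsumm : Summable (fun p : γ × β => f p.2 p.1) :=
    (summable_prod_of_nonneg fun p => hf p.2 p.1).2
      ⟨fun c => (hs c).summable, hS.summable.congr fun c => ((hs c).tsum_eq).symm⟩
  have htotal : HasSum (fun p : γ × β => f p.2 p.1) S := by
    rw [← (hsumm.hasSum.prod_fiberwise hs).unique hS]
    exact hsumm.hasSum
  exact ((Equiv.prodComm β γ).hasSum_iff.mpr htotal).prod_fiberwise hr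

theorem hasSum_mul_log_add_mul_log {x : ℝ} (hx : |x| < 1) :
    HasSum (fun k : ℕ => x ^ (2 * k + 2) / ((2 * k + 1) * (2 * k + 2)))
      (((1 + x) * log (1 + x) + (1 - x) * log (1 - x)) / 2) := by
  have hodd := (hasSum_log_sub_log_of_abs_lt_one hx).mul_left (x / 2)
  have heven := (hasSum_pow_div_log_of_abs_lt_one (x := x ^ 2) (by
    rw [abs_pow]; exact pow_lt_one₀ (abs_nonneg x) hx two_ne_zero)).div_const 2
  have hlog : log (1 - x ^ 2) = log (1 + x) + log (1 - x) := by
    rw [← log_mul (by linarith [neg_abs_le x]) (by linarith [le_abs_self x])]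
    ring_nf
  rw [show ((1 + x) * log (1 + x) + (1 - x) * log (1 - x)) / 2 =
      x / 2 * (log (1 + x) - log (1 - x)) - -log (1 - x ^ 2) / 2 by rw [hlog]; ring]
  refine (hodd.sub heven).congr_fun fun k => ?_
  field_simp
  ring

theorem one_sub_binEnt_one_sub_div_two {x : ℝ} (hx : |x| < 1) :
    1 - binEnt ((1 - x) / 2) = ((1 + x) * log (1 + x) + (1 - x) * log (1 - x)) / 2 / log 2 := by
  have h1 : 1 - x ≠ 0 := by linarith [le_abs_self x]
  have h2 : 1 + x ≠ 0 := by linarith [neg_abs_le x]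
  have hlog2 : log 2 ≠ 0 := (log_pos one_lt_two).ne'
  rw [binEnt, show 1 - (1 - x) / 2 = (1 + x) / 2 by ring, logb, logb,
    log_div h1 two_ne_zero, log_div h2 two_ne_zero]
  field_simp
  ring

/-- The coefficient of `x ^ (2 * (k + 1))` in the power series of `1 - h((1 - x) / 2)`. -/
noncomputable def binEntSeriesCoeff (k : ℕ) : ℝ :=
  logb 2 (exp 1) / (2 * ((k : ℝ) + 1) * (2 * ((k : ℝ) + 1) - 1))

theorem binEntSeriesCoeff_nonneg (k : ℕ) : 0 ≤ binEntSeriesCoeff k :=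
  div_nonneg (logb_nonneg one_lt_two (one_le_exp zero_le_one))
    (by nlinarith [k.cast_nonneg (α := ℝ)])

theorem hasSum_one_sub_binEnt {x : ℝ} (hx : |x| < 1) :
    HasSum (fun k : ℕ => binEntSeriesCoeff k * x ^ (2 * (k + 1)))
      (1 - binEnt ((1 - x) / 2)) := by
  rw [one_sub_binEnt_one_sub_div_two hx]
  refine ((hasSum_mul_log_add_mul_log hx).div_const (log 2)).congr_fun fun k => ?_
  have hlog2 : log 2 ≠ 0 := (log_pos one_lt_two).ne'
  have hk : 2 * ((k : ℝ) + 1) - 1 ≠ 0 := by linarith [k.cast_nonneg (α := ℝ)]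
  rw [binEntSeriesCoeff, logb, log_exp]
  field_simp
  ring

theorem hasSum_geometric_pgf {lam t : ℝ} (h : ‖(1 - lam) * t‖ < 1) :
    HasSum (fun g : ℕ => (1 - lam) ^ g * lam * t ^ (g + 1))
      (lam * t / (1 - (1 - lam) * t)) := by
  rw [div_eq_mul_inv]
  refine ((hasSum_geometric_of_norm_lt_one h).mul_left (lam * t)).congr_fun fun g => ?_
  rw [mul_pow]
  ring

theorem geometric_pgf_le {lam t : ℝ} (hl0 : 0 < lam) (hl1 : lam ≤ 1) (ht0 : 0 ≤ t)
    (ht1 : t ≤ 1) : lam * t / (1 - (1 - lam) * t) ≤ t := by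
  rw [div_le_iff₀ (by nlinarith)]
  nlinarith [mul_nonneg ht0 (sub_nonneg.2 ht1), mul_nonneg (sub_nonneg.2 hl1) ht0]

/-- For `0 < q < 1/2`, `0 < λ < 1` and `G` geometric with parameter `λ`,
`E[h((1-(1-2q)^G)/2)] = 1 - Σ_{k≥1} (log₂e)/(2k(2k-1))·λ(1-2q)^{2k}/(1-(1-λ)(1-2q)^{2k})`,
and the series converges. -/
theorem geometric_entropy_series (q lam : ℝ) (hq : q ∈ Set.Ioo (0:ℝ) (1/2))
    (hlam : lam ∈ Set.Ioo (0:ℝ) 1) :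
    Summable (fun k : ℕ => Real.logb 2 (Real.exp 1) / (2*((k:ℝ)+1) * (2*((k:ℝ)+1) - 1)) *
        (lam * (1 - 2*q)^(2*(k+1)) / (1 - (1 - lam) * (1 - 2*q)^(2*(k+1))))) ∧
    (∑' g : ℕ, (1 - lam)^g * lam * binEnt ((1 - (1 - 2*q)^(g+1))/2)) =
      1 - ∑' k : ℕ, Real.logb 2 (Real.exp 1) / (2*((k:ℝ)+1) * (2*((k:ℝ)+1) - 1)) *
        (lam * (1 - 2*q)^(2*(k+1)) / (1 - (1 - lam) * (1 - 2*q)^(2*(k+1)))) := by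
  obtain ⟨hq0, hq1⟩ := hq
  obtain ⟨hl0, hl1⟩ := hlam
  set θ := 1 - 2 * q
  have hθ0 : 0 < θ := by linarith
  have hθ1 : θ < 1 := by linarith
  have hμ0 : 0 < 1 - lam := by linarith
  set a : ℕ → ℕ → ℝ := fun g k =>
    (1 - lam) ^ g * lam * (binEntSeriesCoeff k * (θ ^ (g + 1)) ^ (2 * (k + 1)))
  have ha : ∀ g k, 0 ≤ a g k := fun g k => by
    have := binEntSeriesCoeff_nonneg k
    positivity
  have hrow (g : ℕ) :
      HasSum (a g) ((1 - lam) ^ g * lam * (1 - binEnt ((1 - θ ^ (g + 1)) / 2))) := by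
    refine (hasSum_one_sub_binEnt ?_).mul_left _
    rw [abs_of_pos (by positivity)]
    exact pow_lt_one₀ hθ0.le hθ1 g.succ_ne_zero
  have hcol (k : ℕ) : HasSum (a · k)
      (binEntSeriesCoeff k * (lam * θ ^ (2 * (k + 1)) / (1 - (1 - lam) * θ ^ (2 * (k + 1))))) := by
    have ht : θ ^ (2 * (k + 1)) ≤ 1 := pow_le_one₀ hθ0.le hθ1.le
    refine ((hasSum_geometric_pgf ?_).mul_left (binEntSeriesCoeff k)).congr_fun fun g => ?_
    · rw [norm_mul, Real.norm_of_nonneg hμ0.le, Real.norm_of_nonneg (by positivity)]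
      nlinarith
    · simp only [a, ← pow_mul, mul_comm (g + 1)]
      ring
  have hsumm := (hasSum_one_sub_binEnt (abs_lt.2 ⟨by linarith, hθ1⟩)).summable.of_nonneg_of_le
    (fun k => (hcol k).nonneg (ha · k)) fun k => mul_le_mul_of_nonneg_left
      (geometric_pgf_le hl0 hl1.le (by positivity) (pow_le_one₀ hθ0.le hθ1.le))
      (binEntSeriesCoeff_nonneg k)
  have hexpect := hasSum_rows_of_hasSum_cols_of_nonneg ha hrow hcol hsumm.hasSum
  have hmass : HasSum (fun g : ℕ => (1 - lam) ^ g * lam) 1 := by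
    have := hasSum_geometric_pgf (lam := lam) (t := 1)
      (by rw [mul_one, Real.norm_of_nonneg hμ0.le]; linarith)
    simpa only [one_pow, mul_one, sub_sub_cancel, div_self hl0.ne'] using this
  exact ⟨hsumm, ((hmass.sub hexpect).congr_fun fun g => by ring).tsum_eq⟩
end

section
/- For every p with |p| ≤ 1/2, the binary entropy function satisfies the convergent series expansion h(1/2 - p) = 1 - Σ_{k=1}^∞ (log₂e)/(2k(2k-1)) · (2p)^{2k}. -/
open Real Filter MeasureTheory

/-!
With `x = 2p`, `binEnt ((1 - x) / 2) = 1 - ((1 - x) log (1 - x) + (1 + x) log (1 + x)) / (2 log 2)`.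
Writing `(1 - x) log (1 - x) + (1 + x) log (1 + x) = log (1 - x²) + x (log (1 + x) - log (1 - x))`
and inserting the classical series of both logarithms gives, for `|x| < 1`,
`∑ x^(2k+2) / ((k+1)(2k+1))`. The coefficients are summable, so the series converges uniformly on
`[-1, 1]` and the identity extends to the endpoints by continuity.
-/

section PowerSeriesOnClosedBall

open Metric

variable {ι 𝕜 : Type*}

lemma norm_mul_pow_le_of_norm_le_one [NormedField 𝕜] (a : 𝕜) (n : ℕ) {x : 𝕜} (hx : ‖x‖ ≤ 1) :
    ‖a * x ^ n‖ ≤ ‖a‖ := by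
  rw [norm_mul, norm_pow]
  exact mul_le_of_le_one_right (norm_nonneg a) (pow_le_one₀ (norm_nonneg x) hx)

lemma continuousOn_tsum_mul_pow_closedBall [NormedField 𝕜] [CompleteSpace 𝕜] {a : ι → 𝕜}
    (ha : Summable fun k => ‖a k‖) (n : ι → ℕ) :
    ContinuousOn (fun x => ∑' k, a k * x ^ n k) (closedBall (0 : 𝕜) 1) :=
  continuousOn_tsum (fun k => (continuous_const.mul (continuous_pow (n k))).continuousOn) ha
    fun k _ hx => norm_mul_pow_le_of_norm_le_one (a k) (n k) (mem_closedBall_zero_iff.1 hx)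

lemma hasSum_mul_pow_of_norm_le_one [RCLike 𝕜] {a : ι → 𝕜} {n : ι → ℕ} {f : 𝕜 → 𝕜}
    (ha : Summable fun k => ‖a k‖) (hf : ContinuousOn f (closedBall 0 1))
    (hsum : ∀ x : 𝕜, ‖x‖ < 1 → HasSum (fun k => a k * x ^ n k) (f x)) {x : 𝕜} (hx : ‖x‖ ≤ 1) :
    HasSum (fun k => a k * x ^ n k) (f x) := by
  have heq : Set.EqOn (fun x => ∑' k, a k * x ^ n k) f (closedBall 0 1) :=
    Set.EqOn.of_subset_closure (fun y hy => (hsum y (mem_ball_zero_iff.1 hy)).tsum_eq)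
      (continuousOn_tsum_mul_pow_closedBall ha n) hf ball_subset_closedBall
      (closure_ball (0 : 𝕜) one_ne_zero).ge
  have hsummable : Summable fun k => a k * x ^ n k :=
    ha.of_norm_bounded fun k => norm_mul_pow_le_of_norm_le_one (a k) (n k) hx
  exact hsummable.hasSum_iff.2 (heq (mem_closedBall_zero_iff.2 hx))

end PowerSeriesOnClosedBall

namespace Real

lemma summable_inv_succ_mul_two_mul_add_one :
    Summable fun k : ℕ => ((k + 1) * (2 * k + 1) : ℝ)⁻¹ := by
  have hsq : Summable fun k : ℕ => (((k + 1 : ℕ) : ℝ) ^ 2)⁻¹ :=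
    (summable_nat_add_iff 1).2 (summable_nat_pow_inv.2 one_lt_two)
  refine hsq.of_nonneg_of_le (fun k => by positivity) fun k => ?_
  push_cast
  gcongr
  nlinarith

lemma hasSum_one_sub_mul_log_add_one_add_mul_log {x : ℝ} (hx : |x| < 1) :
    HasSum (fun k : ℕ => ((k + 1) * (2 * k + 1) : ℝ)⁻¹ * x ^ (2 * k + 2))
      ((1 - x) * log (1 - x) + (1 + x) * log (1 + x)) := by
  have hx2 : |x ^ 2| < 1 := by
    rw [abs_pow, ← one_pow 2]
    exact pow_lt_pow_left₀ hx (abs_nonneg x) two_ne_zero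
  have hsub : 1 - x ≠ 0 := by linarith [le_abs_self x]
  have hadd : 1 + x ≠ 0 := by linarith [neg_abs_le x]
  have hterm : ∀ k : ℕ, x * (2 * (1 / (2 * k + 1)) * x ^ (2 * k + 1)) - (x ^ 2) ^ (k + 1) / (k + 1)
      = ((k + 1) * (2 * k + 1) : ℝ)⁻¹ * x ^ (2 * k + 2) := fun k => by
    field_simp
    ring
  have hvalue : x * (log (1 + x) - log (1 - x)) - -log (1 - x ^ 2)
      = (1 - x) * log (1 - x) + (1 + x) * log (1 + x) := by
    rw [show 1 - x ^ 2 = (1 - x) * (1 + x) by ring, log_mul hsub hadd]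
    ring
  simpa only [hterm, hvalue] using
    ((hasSum_log_sub_log_of_abs_lt_one hx).mul_left x).sub (hasSum_pow_div_log_of_abs_lt_one hx2)

lemma hasSum_one_sub_mul_log_add_one_add_mul_log_of_abs_le_one {x : ℝ} (hx : |x| ≤ 1) :
    HasSum (fun k : ℕ => ((k + 1) * (2 * k + 1) : ℝ)⁻¹ * x ^ (2 * k + 2))
      ((1 - x) * log (1 - x) + (1 + x) * log (1 + x)) := by
  have hcont : Continuous fun x : ℝ => (1 - x) * log (1 - x) + (1 + x) * log (1 + x) := by
    fun_prop
  have hnorm : Summable fun k : ℕ => ‖((k + 1) * (2 * k + 1) : ℝ)⁻¹‖ := by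
    simpa only [Real.norm_eq_abs] using summable_inv_succ_mul_two_mul_add_one.abs
  refine hasSum_mul_pow_of_norm_le_one hnorm hcont.continuousOn (fun y hy => ?_)
    (by rwa [Real.norm_eq_abs])
  exact hasSum_one_sub_mul_log_add_one_add_mul_log (by rwa [← Real.norm_eq_abs])

end Real

lemma binEnt_one_sub_div_two (x : ℝ) :
    binEnt ((1 - x) / 2) =
      1 - ((1 - x) * log (1 - x) + (1 + x) * log (1 + x)) / (2 * log 2) := by
  have mul_log_half : ∀ y : ℝ, y * log (y / 2) = y * log y - y * log 2 := by
    intro y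
    rcases eq_or_ne y 0 with rfl | hy
    · simp
    · rw [log_div hy two_ne_zero]
      ring
  have hx : ((1 - x) / 2) * logb 2 ((1 - x) / 2) =
      ((1 - x) * log (1 - x) - (1 - x) * log 2) / (2 * log 2) := by
    rw [logb, ← mul_log_half]
    ring
  have hx' : (1 - (1 - x) / 2) * logb 2 (1 - (1 - x) / 2) =
      ((1 + x) * log (1 + x) - (1 + x) * log 2) / (2 * log 2) := by
    rw [logb, ← mul_log_half, show 1 - (1 - x) / 2 = (1 + x) / 2 by ring]
    ring
  rw [binEnt, neg_mul, hx, hx']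
  field_simp
  ring

/-- Taylor expansion of the binary entropy function: for `|p| ≤ 1/2`,
`h(1/2 - p) = 1 - Σ_{k≥1} (log₂e)/(2k(2k-1))·(2p)^{2k}`, a convergent series. -/
theorem binEnt_taylor_expansion (p : ℝ) (hp : |p| ≤ 1/2) :
    Summable (fun k : ℕ =>
      Real.logb 2 (Real.exp 1) / (2*((k:ℝ)+1) * (2*((k:ℝ)+1) - 1)) * (2*p)^(2*(k+1))) ∧
    binEnt (1/2 - p) =
      1 - ∑' k : ℕ,
        Real.logb 2 (Real.exp 1) / (2*((k:ℝ)+1) * (2*((k:ℝ)+1) - 1)) * (2*p)^(2*(k+1)) := by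
  have hx : |2 * p| ≤ 1 := by
    rw [abs_mul, abs_two]
    linarith
  have hsum := (hasSum_one_sub_mul_log_add_one_add_mul_log_of_abs_le_one hx).mul_left
    (2 * log 2)⁻¹
  have hterm : (fun k : ℕ =>
      logb 2 (exp 1) / (2*((k:ℝ)+1) * (2*((k:ℝ)+1) - 1)) * (2*p)^(2*(k+1))) =
      fun k : ℕ => (2 * log 2)⁻¹ * (((k + 1) * (2 * k + 1) : ℝ)⁻¹ * (2 * p) ^ (2 * k + 2)) := by
    funext k
    rw [logb, log_exp, show 2 * ((k : ℝ) + 1) * (2 * ((k : ℝ) + 1) - 1)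
      = 2 * ((k + 1) * (2 * k + 1)) by ring]
    field_simp
    ring
  rw [hterm]
  refine ⟨hsum.summable, ?_⟩
  rw [hsum.tsum_eq, show (1 / 2 - p : ℝ) = (1 - 2 * p) / 2 by ring, binEnt_one_sub_div_two]
  ring
end

section
/- For all α ∈ [0,1] and γ ∈ [0,1], h(α*γ) ≥ h(γ) + (1-h(γ))·4α(1-α) = 1 - (1-2α)²·(1-h(γ)), where a*b := a(1-b)+b(1-a). -/
open Real Filter MeasureTheory

/-
Write `x = 1 - 2p`. Then `1 - h(p) = F(x) / log 2` with
`F(x) = ((1+x) log(1+x) + (1-x) log(1-x)) / 2 = ∑_{k ≥ 0} x^(2k+2) / ((2k+1)(2k+2))`,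
and `1 - 2(α*γ) = (1-2α)(1-2γ)`. Since the series has nonnegative coefficients and only even
powers, `F(uv) ≤ u² F(v)` for `|u| ≤ 1`, which with `u = 1-2α`, `v = 1-2γ` is the bound.
-/

open Set

noncomputable def entropyDeficit (x : ℝ) : ℝ :=
  ((1 + x) * log (1 + x) + (1 - x) * log (1 - x)) / 2

theorem hasSum_entropyDeficit {x : ℝ} (hx : |x| < 1) :
    HasSum (fun k : ℕ => x ^ (2 * k + 2) / ((2 * k + 1) * (2 * k + 2))) (entropyDeficit x) := by
  have hx2 : |x ^ 2| < 1 := by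
    rw [abs_pow]; exact pow_lt_one₀ (abs_nonneg x) hx two_ne_zero
  have hodd := (hasSum_log_sub_log_of_abs_lt_one hx).mul_left (x / 2)
  have heven := (hasSum_pow_div_log_of_abs_lt_one hx2).mul_left (-1 / 2)
  have hsplit : entropyDeficit x
      = x / 2 * (log (1 + x) - log (1 - x)) + -1 / 2 * -log (1 - x ^ 2) := by
    have h1x : 1 - x ^ 2 = (1 + x) * (1 - x) := by ring
    have hp : 0 < 1 + x := by linarith [neg_abs_le x]
    have hm : 0 < 1 - x := by linarith [le_abs_self x]
    rw [entropyDeficit, h1x, log_mul hp.ne' hm.ne']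
    ring
  rw [hsplit]
  refine (hodd.add heven).congr_fun fun k => ?_
  rw [← pow_mul, pow_succ x (2 * k + 1)]
  field_simp
  ring

theorem entropyDeficit_mul_le_of_abs_lt {u v : ℝ} (hu : |u| ≤ 1) (hv : |v| < 1) :
    entropyDeficit (u * v) ≤ u ^ 2 * entropyDeficit v := by
  have huv : |u * v| < 1 := by
    rw [abs_mul]; exact lt_of_le_of_lt (mul_le_of_le_one_left (abs_nonneg v) hu) hv
  refine hasSum_le (fun k => ?_) (hasSum_entropyDeficit huv)
    ((hasSum_entropyDeficit hv).mul_left (u ^ 2))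
  have hu2 : u ^ (2 * k + 2) ≤ u ^ 2 := by
    rw [pow_add, pow_mul]
    exact mul_le_of_le_one_left (by positivity) (pow_le_one₀ (by positivity)
      (by rw [sq_le_one_iff_abs_le_one]; exact hu))
  rw [mul_pow, mul_div_assoc]
  exact mul_le_mul_of_nonneg_right hu2
    (div_nonneg (Even.pow_nonneg ⟨k + 1, by ring⟩ v) (by positivity))

theorem continuous_entropyDeficit : Continuous entropyDeficit := by
  unfold entropyDeficit
  fun_prop

theorem entropyDeficit_mul_le {u v : ℝ} (hu : |u| ≤ 1) (hv : |v| ≤ 1) :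
    entropyDeficit (u * v) ≤ u ^ 2 * entropyDeficit v := by
  have hclosed : IsClosed {v : ℝ | entropyDeficit (u * v) ≤ u ^ 2 * entropyDeficit v} :=
    isClosed_le (continuous_entropyDeficit.comp (continuous_const_mul u))
      (continuous_entropyDeficit.const_mul _)
  have hsub : Ioo (-1 : ℝ) 1 ⊆ {v | entropyDeficit (u * v) ≤ u ^ 2 * entropyDeficit v} :=
    fun v hv => entropyDeficit_mul_le_of_abs_lt hu (abs_lt.2 hv)
  have := hclosed.closure_subset_iff.2 hsub
  rw [closure_Ioo (by norm_num)] at this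
  exact this (abs_le.1 hv)

theorem mul_log_two_mul (y : ℝ) : y * log (2 * y) = y * log 2 + y * log y := by
  rcases eq_or_ne y 0 with rfl | hy
  · simp
  · rw [log_mul two_ne_zero hy]; ring

theorem binEnt_eq_one_sub_entropyDeficit (p : ℝ) :
    binEnt p = 1 - entropyDeficit (1 - 2 * p) / log 2 := by
  have hplus : (1 + (1 - 2 * p)) * log (1 + (1 - 2 * p))
      = 2 * ((1 - p) * log 2 + (1 - p) * log (1 - p)) := by
    rw [show 1 + (1 - 2 * p) = 2 * (1 - p) by ring, mul_assoc, mul_log_two_mul]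
  have hminus : (1 - (1 - 2 * p)) * log (1 - (1 - 2 * p))
      = 2 * (p * log 2 + p * log p) := by
    rw [show 1 - (1 - 2 * p) = 2 * p by ring, mul_assoc, mul_log_two_mul]
  rw [binEnt, entropyDeficit, hplus, hminus, logb, logb]
  field_simp
  ring

theorem one_sub_two_mul_bConv (a c : ℝ) : 1 - 2 * bConv a c = (1 - 2 * a) * (1 - 2 * c) := by
  unfold bConv; ring

theorem abs_one_sub_two_mul_le_one {p : ℝ} (hp : p ∈ Icc (0 : ℝ) 1) : |1 - 2 * p| ≤ 1 :=
  abs_le.2 ⟨by linarith [hp.2], by linarith [hp.1]⟩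

/-- For all `α, γ ∈ [0,1]`:
`h(α*γ) ≥ h(γ) + (1-h(γ))·4α(1-α) = 1 - (1-2α)²·(1-h(γ))`. -/
theorem binEnt_conv_lower_bound (a c : ℝ) (ha : a ∈ Set.Icc (0:ℝ) 1) (hc : c ∈ Set.Icc (0:ℝ) 1) :
    binEnt (bConv a c) ≥ binEnt c + (1 - binEnt c) * (4 * a * (1 - a))
    ∧ binEnt c + (1 - binEnt c) * (4 * a * (1 - a)) = 1 - (1 - 2*a)^2 * (1 - binEnt c) := by
  have hform : binEnt c + (1 - binEnt c) * (4 * a * (1 - a))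
      = 1 - (1 - 2*a)^2 * (1 - binEnt c) := by ring
  refine ⟨?_, hform⟩
  have hdef := entropyDeficit_mul_le (abs_one_sub_two_mul_le_one ha) (abs_one_sub_two_mul_le_one hc)
  rw [ge_iff_le, hform, binEnt_eq_one_sub_entropyDeficit, binEnt_eq_one_sub_entropyDeficit,
    one_sub_two_mul_bConv, sub_sub_cancel, mul_div_assoc']
  gcongr
end
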